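/- arXiv:2109.13132 — 5 statements merged into one kernel-verified Lean document; each statement's English description precedes it below -/
import Mathlib

section
/- Let A, B, C, K, Q, R be real matrices of compatible dimensions with Q, R symmetric positive definite and ρ(A − BKC) < 1. Let Σ_K solve Σ_K = X₀ + (A−BKC) Σ_K (A−BKC)ᵀ with X₀ symmetric positive definite, and define J(K) = Tr((Q + Cᵀ Kᵀ R K C) Σ_K). Then J(K) ≥ σ_min(X₀) · λ_min(R) · σ_min(C)² · ‖K‖², where ‖K‖ is the spectral norm. -/
open Matrix Filter Topology
open scoped ENNReal NNReal

/-- Spectral radius of a real square matrix (max modulus of complex eigenvalues). -/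
noncomputable def specRad {n : ℕ} (A : Matrix (Fin n) (Fin n) ℝ) : ℝ :=
  sSup ((fun z : ℂ => ‖z‖) '' spectrum ℂ (A.map (algebraMap ℝ ℂ)))

/-- Spectral (ℓ²-operator) norm of a real matrix. -/
noncomputable def specNorm {m n : ℕ} (A : Matrix (Fin m) (Fin n) ℝ) : ℝ :=
  ‖LinearMap.toContinuousLinearMap (Matrix.toEuclideanLin A)‖

/-- Frobenius norm. -/
noncomputable def frobNorm {m n : ℕ} (A : Matrix (Fin m) (Fin n) ℝ) : ℝ :=
  Real.sqrt ((Aᵀ * A).trace)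

/-- Least singular value of a real matrix. -/
noncomputable def sigmaMin {m n : ℕ} (A : Matrix (Fin m) (Fin n) ℝ) : ℝ :=
  sInf ((fun v : EuclideanSpace ℝ (Fin m) => ‖Matrix.toEuclideanLin Aᵀ v‖) '' {v | ‖v‖ = 1})

/-- Least (real) eigenvalue, as infimum of the real spectrum. -/
noncomputable def lambdaMin {n : ℕ} (Q : Matrix (Fin n) (Fin n) ℝ) : ℝ :=
  sInf (spectrum ℝ Q)

/-! ### Auxiliary lemmas -/

lemma trace_AMAt_nonneg {p n : ℕ} (A : Matrix (Fin p) (Fin n) ℝ) {D : Matrix (Fin n) (Fin n) ℝ}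
    (hD : ∀ v : Fin n → ℝ, 0 ≤ v ⬝ᵥ D *ᵥ v) : 0 ≤ (A * D * Aᵀ).trace := by
  rw [Matrix.trace]
  refine Finset.sum_nonneg fun i _ => ?_
  have h : (A * D * Aᵀ).diag i = (A i) ⬝ᵥ D *ᵥ (A i) := by
    simp only [Matrix.diag, Matrix.mul_apply, Matrix.transpose_apply, dotProduct,
      Matrix.mulVec, Finset.sum_mul, Finset.mul_sum]
    rw [Finset.sum_comm]
    congr 1; ext j; congr 1; ext k; ring
  rw [h]; exact hD _

lemma trace_psd_mul_nonneg {n : ℕ} {P D : Matrix (Fin n) (Fin n) ℝ}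
    (hP : P.PosSemidef) (hD : ∀ v : Fin n → ℝ, 0 ≤ v ⬝ᵥ D *ᵥ v) : 0 ≤ (P * D).trace := by
  obtain ⟨B, hB⟩ : ∃ B : Matrix (Fin n) (Fin n) ℝ, P = Bᴴ * B := by
    open scoped MatrixOrder in exact CStarAlgebra.nonneg_iff_eq_star_mul_self.mp hP.nonneg
  rw [hB, Matrix.conjTranspose_eq_transpose_of_trivial, Matrix.mul_assoc,
    Matrix.trace_mul_comm]
  exact trace_AMAt_nonneg B hD

lemma dot_conj_transform {p n : ℕ} (U : Matrix (Fin n) (Fin p) ℝ) (D : Matrix (Fin p) (Fin p) ℝ)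
    (v : Fin n → ℝ) :
    v ⬝ᵥ ((U * D * Uᵀ) *ᵥ v) = (Uᵀ *ᵥ v) ⬝ᵥ (D *ᵥ (Uᵀ *ᵥ v)) := by
  rw [← Matrix.mulVec_mulVec, ← Matrix.mulVec_mulVec, Matrix.dotProduct_mulVec v U,
    ← Matrix.mulVec_transpose]

lemma rayleigh_le {k : ℕ} {M : Matrix (Fin k) (Fin k) ℝ} (hM : M.IsHermitian) {c : ℝ}
    (hc : ∀ i, c ≤ hM.eigenvalues i) (v : Fin k → ℝ) :
    c * (v ⬝ᵥ v) ≤ v ⬝ᵥ M *ᵥ v := by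
  classical
  set U : Matrix (Fin k) (Fin k) ℝ := (hM.eigenvectorUnitary : Matrix (Fin k) (Fin k) ℝ) with hU
  have hUU : U * star U = 1 := (Matrix.mem_unitaryGroup_iff).mp (hM.eigenvectorUnitary).2
  have hstar : star U = Uᵀ := by
    rw [← Matrix.conjTranspose_eq_transpose_of_trivial]; rfl
  have hMs : M = U * Matrix.diagonal hM.eigenvalues * Uᵀ := by
    have := hM.spectral_theorem
    rw [Unitary.conjStarAlgAut_apply, ← hU, hstar] at this
    simpa [Function.comp] using this
  set y := Uᵀ *ᵥ v with hy
  have h1 : v ⬝ᵥ M *ᵥ v = ∑ i, hM.eigenvalues i * (y i)^2 := by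
    conv_lhs => rw [hMs]
    rw [dot_conj_transform]
    simp [dotProduct, Matrix.mulVec_diagonal]
    congr 1; ext i; ring
  have h2 : v ⬝ᵥ v = ∑ i, (y i)^2 := by
    have : v ⬝ᵥ v = v ⬝ᵥ ((U * 1 * Uᵀ) *ᵥ v) := by
      rw [Matrix.mul_one, ← hstar, hUU]; simp
    rw [this, dot_conj_transform]
    simp [dotProduct]
    congr 1; ext i; ring
  rw [h1, h2, Finset.mul_sum]
  refine Finset.sum_le_sum fun i _ => ?_
  exact mul_le_mul_of_nonneg_right (hc i) (sq_nonneg _)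

lemma euc_norm_sq' {k : ℕ} (x : Fin k → ℝ) :
    ‖(WithLp.equiv 2 (Fin k → ℝ)).symm x‖ ^ 2 = x ⬝ᵥ x := by
  rw [EuclideanSpace.norm_eq]
  rw [Real.sq_sqrt (Finset.sum_nonneg fun i _ => sq_nonneg _)]
  simp [dotProduct, sq]

lemma sigmaMin_nonneg {m n : ℕ} (A : Matrix (Fin m) (Fin n) ℝ) : 0 ≤ sigmaMin A := by
  apply Real.sInf_nonneg
  rintro x ⟨v, -, rfl⟩
  exact norm_nonneg _

lemma sigmaMin_le {m n : ℕ} (A : Matrix (Fin m) (Fin n) ℝ) (u : EuclideanSpace ℝ (Fin m))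
    (hu : ‖u‖ = 1) : sigmaMin A ≤ ‖Matrix.toEuclideanLin Aᵀ u‖ := by
  apply csInf_le
  · exact ⟨0, by rintro x ⟨v, -, rfl⟩; exact norm_nonneg _⟩
  · exact ⟨u, hu, rfl⟩

lemma sigmaMin_sq_le {m n : ℕ} (A : Matrix (Fin m) (Fin n) ℝ) (v : Fin m → ℝ) :
    sigmaMin A ^ 2 * (v ⬝ᵥ v) ≤ (Aᵀ *ᵥ v) ⬝ᵥ (Aᵀ *ᵥ v) := by
  rcases eq_or_ne v 0 with rfl | hv
  · simp
  · set c := Real.sqrt (v ⬝ᵥ v) with hc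
    have hvv : 0 < v ⬝ᵥ v := by
      have h0 : 0 ≤ v ⬝ᵥ v := Finset.sum_nonneg fun i _ => mul_self_nonneg _
      exact h0.lt_or_eq.resolve_right fun h => hv (dotProduct_self_eq_zero.mp h.symm)
    have hcpos : 0 < c := Real.sqrt_pos.mpr hvv
    have hc2 : c ^ 2 = v ⬝ᵥ v := Real.sq_sqrt hvv.le
    set u : EuclideanSpace ℝ (Fin m) := (WithLp.equiv 2 (Fin m → ℝ)).symm (c⁻¹ • v) with hu
    have hnu : ‖u‖ = 1 := by
      have : ‖u‖ ^ 2 = (c⁻¹ • v) ⬝ᵥ (c⁻¹ • v) := euc_norm_sq' _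
      have h2 : (c⁻¹ • v) ⬝ᵥ (c⁻¹ • v) = c⁻¹ * c⁻¹ * (v ⬝ᵥ v) := by
        simp [smul_dotProduct, dotProduct_smul, smul_eq_mul]; ring
      have h3 : ‖u‖ ^ 2 = 1 := by
        rw [this, h2, ← hc2, pow_two]; field_simp
      nlinarith [norm_nonneg u]
    have h1 := sigmaMin_le A u hnu
    have h4 : ‖Matrix.toEuclideanLin Aᵀ u‖ ^ 2 = (Aᵀ *ᵥ (c⁻¹ • v)) ⬝ᵥ (Aᵀ *ᵥ (c⁻¹ • v)) := by
      rw [hu]; exact euc_norm_sq' _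
    have h5 : (Aᵀ *ᵥ (c⁻¹ • v)) ⬝ᵥ (Aᵀ *ᵥ (c⁻¹ • v)) = c⁻¹ * c⁻¹ * ((Aᵀ *ᵥ v) ⬝ᵥ (Aᵀ *ᵥ v)) := by
      rw [Matrix.mulVec_smul]
      simp [smul_dotProduct, dotProduct_smul, smul_eq_mul]; ring
    have h6 : sigmaMin A ^ 2 ≤ c⁻¹ * c⁻¹ * ((Aᵀ *ᵥ v) ⬝ᵥ (Aᵀ *ᵥ v)) := by
      rw [← h5, ← h4]
      exact pow_le_pow_left₀ (sigmaMin_nonneg A) h1 2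
    have h7 : sigmaMin A ^ 2 * (v ⬝ᵥ v) ≤ (c⁻¹ * c⁻¹ * ((Aᵀ *ᵥ v) ⬝ᵥ (Aᵀ *ᵥ v))) * (v ⬝ᵥ v) :=
      mul_le_mul_of_nonneg_right h6 hvv.le
    calc sigmaMin A ^ 2 * (v ⬝ᵥ v) ≤ (c⁻¹ * c⁻¹ * ((Aᵀ *ᵥ v) ⬝ᵥ (Aᵀ *ᵥ v))) * (v ⬝ᵥ v) := h7
      _ = (Aᵀ *ᵥ v) ⬝ᵥ (Aᵀ *ᵥ v) := by
          rw [← hc2, pow_two]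
          field_simp

lemma sigmaMin_le_eigenvalues {k : ℕ} {M : Matrix (Fin k) (Fin k) ℝ} (hM : M.PosSemidef)
    (i : Fin k) : sigmaMin M ≤ hM.1.eigenvalues i := by
  classical
  set b := hM.1.eigenvectorBasis with hb
  have hnorm : ‖b i‖ = 1 := b.orthonormal.1 i
  have h1 := sigmaMin_le M (b i) hnorm
  have hMt : Mᵀ = M := by
    rw [← Matrix.conjTranspose_eq_transpose_of_trivial]; exact hM.1
  rw [hMt] at h1
  have h2 : Matrix.toEuclideanLin M (b i) = hM.1.eigenvalues i • (b i) := by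
    apply (WithLp.equiv 2 (Fin k → ℝ)).injective
    show M *ᵥ WithLp.equiv 2 _ (b i) = _
    have := hM.1.mulVec_eigenvectorBasis i
    simpa using this
  rw [h2, norm_smul] at h1
  rw [hnorm] at h1
  simpa [abs_of_nonneg (hM.eigenvalues_nonneg i)] using h1

lemma trace_mul_transpose_self {m n : ℕ} (K : Matrix (Fin m) (Fin n) ℝ) :
    (K * Kᵀ).trace = ∑ i, ∑ j, (K i j) ^ 2 := by
  simp [Matrix.trace, Matrix.diag, Matrix.mul_apply, sq]

lemma trace_mul_transpose_self_nonneg {m n : ℕ} (K : Matrix (Fin m) (Fin n) ℝ) :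
    0 ≤ (K * Kᵀ).trace := by
  rw [trace_mul_transpose_self]
  exact Finset.sum_nonneg fun i _ => Finset.sum_nonneg fun j _ => sq_nonneg _

lemma specNorm_nonneg {m n : ℕ} (A : Matrix (Fin m) (Fin n) ℝ) : 0 ≤ specNorm A :=
  norm_nonneg _

lemma specNorm_sq_le_trace {m n : ℕ} (K : Matrix (Fin m) (Fin n) ℝ) :
    specNorm K ^ 2 ≤ (K * Kᵀ).trace := by
  set t := (K * Kᵀ).trace with htdef
  have ht0 : 0 ≤ t := trace_mul_transpose_self_nonneg K
  have hb : specNorm K ≤ Real.sqrt t := by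
    apply ContinuousLinearMap.opNorm_le_bound _ (Real.sqrt_nonneg _)
    intro x
    have hx : x = (WithLp.equiv 2 (Fin n → ℝ)).symm (WithLp.equiv 2 (Fin n → ℝ) x) := rfl
    set xv : Fin n → ℝ := WithLp.equiv 2 (Fin n → ℝ) x with hxv
    have hfx : ‖LinearMap.toContinuousLinearMap (Matrix.toEuclideanLin K) x‖ ^ 2
        = (K *ᵥ xv) ⬝ᵥ (K *ᵥ xv) := by
      show ‖Matrix.toEuclideanLin K x‖ ^ 2 = _
      rw [Matrix.toEuclideanLin_apply]; exact euc_norm_sq' _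
    have hxn : ‖x‖ ^ 2 = xv ⬝ᵥ xv := by
      conv_lhs => rw [hx]
      rw [euc_norm_sq']
    have hkey : (K *ᵥ xv) ⬝ᵥ (K *ᵥ xv) ≤ t * (xv ⬝ᵥ xv) := by
      have hcs : ∀ i, ((K *ᵥ xv) i)^2 ≤ (∑ j, (K i j)^2) * (∑ j, (xv j)^2) := by
        intro i
        exact Finset.sum_mul_sq_le_sq_mul_sq Finset.univ (fun j => K i j) xv
      calc (K *ᵥ xv) ⬝ᵥ (K *ᵥ xv) = ∑ i, ((K *ᵥ xv) i)^2 := by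
            simp [dotProduct, sq]
        _ ≤ ∑ i, (∑ j, (K i j)^2) * (∑ j, (xv j)^2) := Finset.sum_le_sum fun i _ => hcs i
        _ = t * (xv ⬝ᵥ xv) := by
            rw [htdef, trace_mul_transpose_self, ← Finset.sum_mul]
            congr 1
            simp [dotProduct, sq]
    have h2 : ‖LinearMap.toContinuousLinearMap (Matrix.toEuclideanLin K) x‖ ^ 2
        ≤ (Real.sqrt t * ‖x‖) ^ 2 := by
      rw [hfx, mul_pow, Real.sq_sqrt ht0, hxn]
      exact hkey
    have h3 : 0 ≤ Real.sqrt t * ‖x‖ := mul_nonneg (Real.sqrt_nonneg _) (norm_nonneg _)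
    nlinarith [norm_nonneg (LinearMap.toContinuousLinearMap (Matrix.toEuclideanLin K) x)]
  calc specNorm K ^ 2 ≤ Real.sqrt t ^ 2 := pow_le_pow_left₀ (specNorm_nonneg K) hb 2
    _ = t := Real.sq_sqrt ht0

section Convergence

attribute [local instance] Matrix.linftyOpNormedRing Matrix.linftyOpNormedAlgebra

lemma entry_norm_le {k : ℕ} (A : Matrix (Fin k) (Fin k) ℂ) (i j : Fin k) :
    ‖A i j‖ ≤ ‖A‖ := by
  have h1 : ‖A *ᵥ Pi.single j 1‖ ≤ ‖A‖ * ‖(Pi.single j 1 : Fin k → ℂ)‖ :=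
    Matrix.linfty_opNorm_mulVec A _
  have h2 : ‖(Pi.single j 1 : Fin k → ℂ)‖ ≤ 1 := by
    apply pi_norm_le_iff_of_nonneg zero_le_one |>.mpr
    intro l
    rcases eq_or_ne l j with rfl | hl
    · simp
    · simp [Pi.single_eq_of_ne hl]
  have h3 : ‖A i j‖ ≤ ‖A *ᵥ Pi.single j 1‖ := by
    have : (A *ᵥ Pi.single j 1) i = A i j := by simp [Matrix.mulVec_single]
    rw [← this]
    exact norm_le_pi_norm (A *ᵥ Pi.single j 1) i
  calc ‖A i j‖ ≤ ‖A *ᵥ Pi.single j 1‖ := h3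
    _ ≤ ‖A‖ * ‖(Pi.single j 1 : Fin k → ℂ)‖ := h1
    _ ≤ ‖A‖ * 1 := mul_le_mul_of_nonneg_left h2 (norm_nonneg _)
    _ = ‖A‖ := mul_one _

lemma entries_pow_tendsto_zero {k : ℕ} (M : Matrix (Fin k) (Fin k) ℝ)
    (h : specRad M < 1) (i j : Fin k) :
    Tendsto (fun t : ℕ => (M ^ t) i j) atTop (𝓝 0) := by
  haveI : Nonempty (Fin k) := ⟨i⟩
  set Mc := M.map (algebraMap ℝ ℂ) with hMc
  haveI : CompleteSpace (Matrix (Fin k) (Fin k) ℂ) := FiniteDimensional.complete ℂ _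
  have hρ : spectralRadius ℂ Mc < 1 := by
    have hb : ∀ z ∈ spectrum ℂ Mc, ‖z‖ ≤ specRad M := by
      intro z hz
      apply le_csSup
      · refine ⟨‖Mc‖ * ‖(1 : Matrix (Fin k) (Fin k) ℂ)‖, ?_⟩
        rintro x ⟨w, hw, rfl⟩
        exact spectrum.norm_le_norm_mul_of_mem hw
      · exact ⟨z, hz, rfl⟩
    have h1 : spectralRadius ℂ Mc < (1 : NNReal) := by
      apply spectrum.spectralRadius_lt_of_forall_lt
      intro z hz
      have := (hb z hz).trans_lt h
      simpa [← NNReal.coe_lt_coe, coe_nnnorm] using this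
    simpa using h1
  have gel := spectrum.pow_nnnorm_pow_one_div_tendsto_nhds_spectralRadius Mc
  obtain ⟨c, hc1, hc2⟩ := ENNReal.lt_iff_exists_nnreal_btwn.mp hρ
  have hc2' : c < 1 := by exact_mod_cast hc2
  have hev1 : ∀ᶠ t : ℕ in atTop, ((‖Mc ^ t‖₊ : ℝ≥0∞) ^ (1 / (t:ℝ))) < (c : ℝ≥0∞) :=
    gel.eventually_lt_const hc1
  have hev : ∀ᶠ t : ℕ in atTop, ‖Mc ^ t‖ ≤ (c : ℝ) ^ t := by
    filter_upwards [hev1, eventually_ge_atTop 1] with t ht ht1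
    have htne : (t : ℝ) ≠ 0 := by positivity
    have h1 : (‖Mc ^ t‖₊ : ℝ≥0∞) ≤ (c : ℝ≥0∞) ^ (t : ℝ) := by
      have hpw := ENNReal.rpow_le_rpow ht.le (by positivity : (0:ℝ) ≤ (t:ℝ))
      rwa [← ENNReal.rpow_mul, one_div, inv_mul_cancel₀ htne, ENNReal.rpow_one] at hpw
    have h2 : (‖Mc ^ t‖₊ : ℝ≥0∞) ≤ ((c ^ t : ℝ≥0) : ℝ≥0∞) := by
      rwa [ENNReal.rpow_natCast, ← ENNReal.coe_pow] at h1
    have h3 : ‖Mc ^ t‖₊ ≤ c ^ t := by exact_mod_cast h2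
    calc ‖Mc ^ t‖ = ((‖Mc ^ t‖₊ : ℝ≥0) : ℝ) := rfl
      _ ≤ ((c ^ t : ℝ≥0) : ℝ) := by exact_mod_cast h3
      _ = (c : ℝ) ^ t := by push_cast; ring
  refine squeeze_zero_norm' (a := fun t => (c:ℝ)^t) ?_ ?_
  · filter_upwards [hev] with t ht
    have hmap : Mc ^ t = (M ^ t).map (algebraMap ℝ ℂ) := by
      rw [hMc]
      exact (map_pow ((algebraMap ℝ ℂ).mapMatrix) M t).symm
    have hent : ‖(Mc ^ t) i j‖ ≤ ‖Mc ^ t‖ := entry_norm_le _ i j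
    rw [hmap] at hent
    simp only [Matrix.map_apply] at hent
    rw [Complex.coe_algebraMap, Complex.norm_real] at hent
    have h2 : ‖Mc ^ t‖ = ‖(M ^ t).map Complex.ofReal‖ := by
      rw [hmap, Complex.coe_algebraMap]
    calc ‖(M ^ t) i j‖ ≤ ‖(M ^ t).map Complex.ofReal‖ := hent
      _ = ‖Mc ^ t‖ := h2.symm
      _ ≤ (c:ℝ)^t := ht
  · exact tendsto_pow_atTop_nhds_zero_of_lt_one c.coe_nonneg hc2'

end Convergence

lemma posDef_spectrum_pos {k : ℕ} {R : Matrix (Fin k) (Fin k) ℝ} (hR : R.PosDef) {μ : ℝ}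
    (hμ : μ ∈ spectrum ℝ R) : 0 < μ := by
  classical
  have hμ' : μ ∈ spectrum ℝ (Matrix.toEuclideanLin R) := by
    rwa [Matrix.spectrum_toEuclideanLin]
  have he : Module.End.HasEigenvalue (Matrix.toEuclideanLin R) μ :=
    Module.End.hasEigenvalue_iff_mem_spectrum.mpr hμ'
  obtain ⟨v, hv⟩ := he.exists_hasEigenvector
  have hv1 : Matrix.toEuclideanLin R v = μ • v := Module.End.mem_eigenspace_iff.mp hv.1
  set w : Fin k → ℝ := WithLp.equiv 2 (Fin k → ℝ) v with hw
  have hw0 : w ≠ 0 := by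
    intro h0
    exact hv.2 ((WithLp.equiv 2 (Fin k → ℝ)).injective (by simpa [hw] using h0))
  have hRw : R *ᵥ w = μ • w := by
    have := congrArg (WithLp.equiv 2 (Fin k → ℝ)) hv1
    change R *ᵥ WithLp.equiv 2 _ v = _ at this
    simpa [hw] using this
  have hpos := hR.dotProduct_mulVec_pos hw0
  rw [hRw] at hpos
  simp only [star_trivial, dotProduct_smul, smul_eq_mul] at hpos
  have hww : 0 < w ⬝ᵥ w := by
    have h0 : 0 ≤ w ⬝ᵥ w := Finset.sum_nonneg fun i _ => mul_self_nonneg _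
    exact h0.lt_or_eq.resolve_right fun h => hw0 (dotProduct_self_eq_zero.mp h.symm)
  nlinarith

lemma lambdaMin_nonneg {k : ℕ} {R : Matrix (Fin k) (Fin k) ℝ} (hR : R.PosDef) :
    0 ≤ lambdaMin R :=
  Real.sInf_nonneg fun _ hμ => (posDef_spectrum_pos hR hμ).le

lemma lambdaMin_le_eigenvalues {k : ℕ} {R : Matrix (Fin k) (Fin k) ℝ} (hR : R.PosDef) (i : Fin k) :
    lambdaMin R ≤ hR.1.eigenvalues i :=
  csInf_le ⟨0, fun _ hμ => (posDef_spectrum_pos hR hμ).le⟩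
    (hR.1.eigenvalues_mem_spectrum_real i)

lemma unroll {k : ℕ} {M X S : Matrix (Fin k) (Fin k) ℝ} (hS : S = X + M * S * Mᵀ) (T : ℕ) :
    S = (∑ t ∈ Finset.range T, M ^ t * X * (Mᵀ) ^ t) + M ^ T * S * (Mᵀ) ^ T := by
  induction T with
  | zero => simp
  | succ T ih =>
    have key : M ^ T * S * (Mᵀ) ^ T
        = M ^ T * X * (Mᵀ) ^ T + M ^ (T+1) * S * (Mᵀ) ^ (T+1) := by
      conv_lhs => rw [hS]
      rw [pow_succ M T, pow_succ' (Mᵀ) T]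
      noncomm_ring
    rw [Finset.sum_range_succ]
    conv_lhs => rw [ih]
    rw [key]
    abel

lemma qf_S {k : ℕ} {M X S : Matrix (Fin k) (Fin k) ℝ} (hX : X.PosSemidef)
    (hS : S = X + M * S * Mᵀ)
    (hconv : ∀ i j, Tendsto (fun t : ℕ => (M ^ t) i j) atTop (𝓝 0)) (v : Fin k → ℝ) :
    v ⬝ᵥ X *ᵥ v ≤ v ⬝ᵥ S *ᵥ v := by
  have hmat : Tendsto (fun t : ℕ => M ^ t) atTop (𝓝 (0 : Matrix (Fin k) (Fin k) ℝ)) := by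
    refine tendsto_pi_nhds.mpr ?_
    intro i
    rw [tendsto_pi_nhds]
    intro j
    simpa using hconv i j
  have hF : Continuous fun N : Matrix (Fin k) (Fin k) ℝ => v ⬝ᵥ ((N * S * Nᵀ) *ᵥ v) := by
    have h1 : Continuous fun N : Matrix (Fin k) (Fin k) ℝ => N * S * Nᵀ :=
      (continuous_id.matrix_mul continuous_const).matrix_mul continuous_id.matrix_transpose
    exact continuous_const.dotProduct (h1.matrix_mulVec continuous_const)
  have hrem : Tendsto (fun T : ℕ => v ⬝ᵥ ((M ^ T * S * (Mᵀ) ^ T) *ᵥ v)) atTop (𝓝 0) := by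
    have h := (hF.tendsto 0).comp hmat
    have h2 : ((fun N : Matrix (Fin k) (Fin k) ℝ => v ⬝ᵥ ((N * S * Nᵀ) *ᵥ v)) ∘ fun t : ℕ => M ^ t)
        = fun T : ℕ => v ⬝ᵥ ((M ^ T * S * (Mᵀ) ^ T) *ᵥ v) := by
      funext T
      simp [Function.comp, Matrix.transpose_pow]
    rw [h2] at h
    simpa using h
  have hsum : ∀ (s : Finset ℕ) (f : ℕ → Matrix (Fin k) (Fin k) ℝ),
      v ⬝ᵥ ((∑ t ∈ s, f t) *ᵥ v) = ∑ t ∈ s, v ⬝ᵥ (f t *ᵥ v) := by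
    intro s f
    induction s using Finset.cons_induction with
    | empty => simp
    | cons a s ha ih =>
        rw [Finset.sum_cons, Finset.sum_cons, Matrix.add_mulVec, dotProduct_add, ih]
  have hev : ∀ᶠ T : ℕ in atTop,
      v ⬝ᵥ X *ᵥ v + v ⬝ᵥ ((M ^ T * S * (Mᵀ) ^ T) *ᵥ v) ≤ v ⬝ᵥ S *ᵥ v := by
    filter_upwards [eventually_ge_atTop 1] with T hT
    have hid := unroll hS T
    have hsplit : v ⬝ᵥ S *ᵥ v = (∑ t ∈ Finset.range T, v ⬝ᵥ ((M ^ t * X * (Mᵀ) ^ t) *ᵥ v))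
        + v ⬝ᵥ ((M ^ T * S * (Mᵀ) ^ T) *ᵥ v) := by
      conv_lhs => rw [hid]
      rw [Matrix.add_mulVec, dotProduct_add, hsum]
    rw [hsplit]
    apply add_le_add_left
    have hterm : ∀ t ∈ Finset.range T, 0 ≤ v ⬝ᵥ ((M ^ t * X * (Mᵀ) ^ t) *ᵥ v) := by
      intro t _
      rw [← Matrix.transpose_pow, dot_conj_transform]
      have := hX.dotProduct_mulVec_nonneg ((M ^ t)ᵀ *ᵥ v)
      simpa using this
    have h0mem : (0:ℕ) ∈ Finset.range T := Finset.mem_range.mpr hT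
    have := Finset.single_le_sum hterm h0mem
    simpa using this
  have hlim : Tendsto (fun T : ℕ => v ⬝ᵥ X *ᵥ v + v ⬝ᵥ ((M ^ T * S * (Mᵀ) ^ T) *ᵥ v)) atTop
      (𝓝 (v ⬝ᵥ X *ᵥ v)) := by
    simpa using tendsto_const_nhds.add hrem
  exact le_of_tendsto hlim hev

/-- Lower bound of the SOF LQR cost: `J(K) ≥ σ_min(X₀) λ_min(R) σ_min(C)² ‖K‖²`. -/
theorem cost_lower_bound {n m d : ℕ}
    (A : Matrix (Fin n) (Fin n) ℝ) (B : Matrix (Fin n) (Fin m) ℝ)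
    (C : Matrix (Fin d) (Fin n) ℝ) (K : Matrix (Fin m) (Fin d) ℝ)
    (Q X₀ S : Matrix (Fin n) (Fin n) ℝ) (R : Matrix (Fin m) (Fin m) ℝ)
    (hQ : Q.PosDef) (hR : R.PosDef) (hX₀ : X₀.PosDef)
    (hstab : specRad (A - B * K * C) < 1)
    (hS : S = X₀ + (A - B * K * C) * S * (A - B * K * C)ᵀ) :
    ((Q + Cᵀ * Kᵀ * R * K * C) * S).trace ≥
      sigmaMin X₀ * lambdaMin R * sigmaMin C ^ 2 * specNorm K ^ 2 := by
  classical
  set M := A - B * K * C with hM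
  set P := Cᵀ * Kᵀ * R * K * C with hP
  set G := K * C with hG
  have hMconv : ∀ i j, Tendsto (fun t : ℕ => (M ^ t) i j) atTop (𝓝 0) :=
    fun i j => entries_pow_tendsto_zero M hstab i j
  have hSX : ∀ v : Fin n → ℝ, v ⬝ᵥ X₀ *ᵥ v ≤ v ⬝ᵥ S *ᵥ v :=
    qf_S hX₀.posSemidef hS hMconv
  have hX0qf : ∀ v : Fin n → ℝ, 0 ≤ v ⬝ᵥ X₀ *ᵥ v := fun v => by
    simpa using hX₀.posSemidef.dotProduct_mulVec_nonneg v
  have hSqf : ∀ v : Fin n → ℝ, 0 ≤ v ⬝ᵥ S *ᵥ v := fun v => (hX0qf v).trans (hSX v)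
  have hPpsd : P.PosSemidef := by
    have h := hR.posSemidef.conjTranspose_mul_mul_same (B := G)
    have hGH : Gᴴ = Cᵀ * Kᵀ := by
      rw [Matrix.conjTranspose_eq_transpose_of_trivial, hG, Matrix.transpose_mul]
    rw [hGH, hG] at h
    have heq : P = Cᵀ * Kᵀ * R * (K * C) := by rw [hP, Matrix.mul_assoc]
    rw [heq]
    exact h
  have ha : 0 ≤ sigmaMin X₀ := sigmaMin_nonneg X₀
  have hb : 0 ≤ lambdaMin R := lambdaMin_nonneg hR
  have step1 : ((Q + P) * S).trace = (Q * S).trace + (P * S).trace := by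
    rw [Matrix.add_mul, Matrix.trace_add]
  have hQS : 0 ≤ (Q * S).trace := trace_psd_mul_nonneg hQ.posSemidef hSqf
  have hPS : (P * X₀).trace ≤ (P * S).trace := by
    have h := trace_psd_mul_nonneg hPpsd (D := S - X₀) (fun v => by
      rw [Matrix.sub_mulVec, dotProduct_sub]
      have := hSX v
      linarith)
    rw [Matrix.mul_sub, Matrix.trace_sub] at h
    linarith
  have hPX : sigmaMin X₀ * P.trace ≤ (P * X₀).trace := by
    have hqf : ∀ v : Fin n → ℝ, 0 ≤ v ⬝ᵥ ((X₀ - sigmaMin X₀ • 1) *ᵥ v) := by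
      intro v
      rw [Matrix.sub_mulVec, dotProduct_sub, Matrix.smul_mulVec,
        Matrix.one_mulVec, dotProduct_smul, smul_eq_mul]
      have h1 := rayleigh_le hX₀.1 (fun i => sigmaMin_le_eigenvalues hX₀.posSemidef i) v
      linarith
    have h := trace_psd_mul_nonneg hPpsd hqf
    rw [Matrix.mul_sub, Matrix.trace_sub, Matrix.mul_smul, Matrix.mul_one,
      Matrix.trace_smul, smul_eq_mul] at h
    linarith
  have hPtr : P.trace = (R * (G * Gᵀ)).trace := by
    have heq : P = (Cᵀ * Kᵀ) * R * (K * C) := by rw [hP, Matrix.mul_assoc]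
    rw [heq, Matrix.trace_mul_cycle, ← hG]
    have hGt : Gᵀ = Cᵀ * Kᵀ := by rw [hG, Matrix.transpose_mul]
    rw [← hGt, Matrix.trace_mul_comm]
  have hGGt : (G * Gᵀ).PosSemidef := by
    have h := Matrix.posSemidef_self_mul_conjTranspose G
    rwa [Matrix.conjTranspose_eq_transpose_of_trivial] at h
  have hRG : lambdaMin R * (G * Gᵀ).trace ≤ (R * (G * Gᵀ)).trace := by
    have hqf : ∀ w : Fin m → ℝ, 0 ≤ w ⬝ᵥ ((R - lambdaMin R • 1) *ᵥ w) := by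
      intro w
      rw [Matrix.sub_mulVec, dotProduct_sub, Matrix.smul_mulVec,
        Matrix.one_mulVec, dotProduct_smul, smul_eq_mul]
      have h1 := rayleigh_le hR.1 (fun i => lambdaMin_le_eigenvalues hR i) w
      linarith
    have h := trace_psd_mul_nonneg hGGt hqf
    rw [Matrix.mul_sub, Matrix.trace_sub, Matrix.mul_smul, Matrix.mul_one,
      Matrix.trace_smul, smul_eq_mul] at h
    rw [Matrix.trace_mul_comm] at h
    linarith
  have hGK : sigmaMin C ^ 2 * (K * Kᵀ).trace ≤ (G * Gᵀ).trace := by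
    have hqf : ∀ w : Fin d → ℝ, 0 ≤ w ⬝ᵥ ((C * Cᵀ - sigmaMin C ^ 2 • 1) *ᵥ w) := by
      intro w
      rw [Matrix.sub_mulVec, dotProduct_sub, Matrix.smul_mulVec,
        Matrix.one_mulVec, dotProduct_smul, smul_eq_mul]
      have h1 : w ⬝ᵥ ((C * Cᵀ) *ᵥ w) = (Cᵀ *ᵥ w) ⬝ᵥ (Cᵀ *ᵥ w) := by
        have h2 := dot_conj_transform C 1 w
        simpa using h2
      rw [h1]
      have h3 := sigmaMin_sq_le C w
      linarith
    have h := trace_AMAt_nonneg K hqf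
    rw [Matrix.mul_sub, Matrix.sub_mul, Matrix.trace_sub] at h
    have h2 : K * (sigmaMin C ^ 2 • (1 : Matrix (Fin d) (Fin d) ℝ)) * Kᵀ
        = sigmaMin C ^ 2 • (K * Kᵀ) := by
      rw [Matrix.mul_smul, Matrix.mul_one, Matrix.smul_mul]
    rw [h2, Matrix.trace_smul, smul_eq_mul] at h
    have h3 : G * Gᵀ = K * (C * Cᵀ) * Kᵀ := by
      rw [hG, Matrix.transpose_mul, ← Matrix.mul_assoc, Matrix.mul_assoc K C Cᵀ]
    rw [h3]
    linarith
  have hKs := specNorm_sq_le_trace K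
  have c1 : lambdaMin R * (sigmaMin C ^ 2 * specNorm K ^ 2) ≤ (R * (G * Gᵀ)).trace := by
    have t1 : sigmaMin C ^ 2 * specNorm K ^ 2 ≤ sigmaMin C ^ 2 * (K * Kᵀ).trace :=
      mul_le_mul_of_nonneg_left hKs (sq_nonneg _)
    calc lambdaMin R * (sigmaMin C ^ 2 * specNorm K ^ 2)
        ≤ lambdaMin R * (G * Gᵀ).trace :=
          mul_le_mul_of_nonneg_left (t1.trans hGK) hb
      _ ≤ (R * (G * Gᵀ)).trace := hRG
  have c2 : sigmaMin X₀ * (lambdaMin R * (sigmaMin C ^ 2 * specNorm K ^ 2)) ≤ (P * S).trace := by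
    calc sigmaMin X₀ * (lambdaMin R * (sigmaMin C ^ 2 * specNorm K ^ 2))
        ≤ sigmaMin X₀ * P.trace := by
          apply mul_le_mul_of_nonneg_left _ ha
          rw [hPtr]
          exact c1
      _ ≤ (P * X₀).trace := hPX
      _ ≤ (P * S).trace := hPS
  rw [ge_iff_le]
  calc sigmaMin X₀ * lambdaMin R * sigmaMin C ^ 2 * specNorm K ^ 2
      = sigmaMin X₀ * (lambdaMin R * (sigmaMin C ^ 2 * specNorm K ^ 2)) := by ring
    _ ≤ (P * S).trace := c2
    _ ≤ (Q * S).trace + (P * S).trace := by linarith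
    _ = ((Q + P) * S).trace := step1.symm
end

section
/- Coercivity at the stability boundary: let (K_i) be a sequence of matrices with ρ(A − BK_iC) < 1 for all i, converging to a matrix K with ρ(A − BKC) = 1. Then the LQR costs satisfy J(K_i) → +∞, where J(K_i) = Tr(P_{K_i} X₀), P_{K_i} solving P = Q + CᵀK_iᵀRK_iC + (A−BK_iC)ᵀ P (A−BK_iC), with Q, R, X₀ symmetric positive definite. -/
open Matrix Filter Topology

open scoped MatrixOrder in
private lemma psd_eq_tmul {n : ℕ} {P : Matrix (Fin n) (Fin n) ℝ} (hP : P.PosSemidef) :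
    ∃ L : Matrix (Fin n) (Fin n) ℝ, P = Lᴴ * L := by
  obtain ⟨B, rfl⟩ := CStarAlgebra.nonneg_iff_eq_star_mul_self.mp hP.nonneg
  exact ⟨B, rfl⟩

section Aux
variable {n p : ℕ}

private lemma psd_quad_nonneg' {P : Matrix (Fin n) (Fin n) ℝ} (hP : P.PosSemidef) (x : Fin n → ℝ) :
    0 ≤ x ⬝ᵥ (P *ᵥ x) := by simpa using hP.dotProduct_mulVec_nonneg x

private lemma quad_le_trace' {P : Matrix (Fin n) (Fin n) ℝ} (hP : P.PosSemidef) (x : Fin n → ℝ) :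
    x ⬝ᵥ (P *ᵥ x) ≤ P.trace * (x ⬝ᵥ x) := by
  obtain ⟨L, hL⟩ := psd_eq_tmul hP
  have hq : x ⬝ᵥ (P *ᵥ x) = (L *ᵥ x) ⬝ᵥ (L *ᵥ x) := by
    rw [hL, ← mulVec_mulVec, dotProduct_mulVec]
    simp [vecMul_transpose]
  rw [hq]
  have htr : P.trace = ∑ j, ∑ k, L j k ^ 2 := by
    rw [hL]
    simp [Matrix.trace, Matrix.diag, Matrix.mul_apply, sq]
    rw [Finset.sum_comm]
  rw [htr, Finset.sum_mul]
  unfold dotProduct mulVec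
  refine Finset.sum_le_sum fun j _ => ?_
  calc ((fun k => L j k) ⬝ᵥ x) * ((fun k => L j k) ⬝ᵥ x)
      = (∑ k, L j k * x k) ^ 2 := by simp [dotProduct, sq]
    _ ≤ (∑ k, L j k ^ 2) * ∑ k, x k ^ 2 :=
        Finset.sum_mul_sq_le_sq_mul_sq Finset.univ (fun k => L j k) (fun k => x k)
    _ = (∑ k, L j k ^ 2) * (x ⬝ᵥ x) := by simp [dotProduct, sq]

private lemma psd_trace_nonneg' {P : Matrix (Fin n) (Fin n) ℝ} (hP : P.PosSemidef) :
    0 ≤ P.trace := by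
  obtain ⟨L, hL⟩ := psd_eq_tmul hP
  rw [hL]
  simp only [Matrix.trace, Matrix.diag, Matrix.mul_apply, conjTranspose_apply, star_trivial]
  exact Finset.sum_nonneg fun i _ => Finset.sum_nonneg fun k _ => mul_self_nonneg _

private lemma psd_trace_mul_nonneg' {P S : Matrix (Fin n) (Fin n) ℝ} (hP : P.PosSemidef)
    (hS : S.PosSemidef) : 0 ≤ (P * S).trace := by
  obtain ⟨L, hL⟩ := psd_eq_tmul hP
  have h : (P * S).trace = (L * S * Lᴴ).trace := by
    rw [hL, Matrix.mul_assoc, Matrix.trace_mul_comm, Matrix.mul_assoc]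
  rw [h]
  exact psd_trace_nonneg' (hS.mul_mul_conjTranspose_same L)

private lemma posdef_exists_smul_le' {X : Matrix (Fin n) (Fin n) ℝ} (hX : X.PosDef) :
    ∃ c : ℝ, 0 < c ∧ (X - c • 1).PosSemidef := by
  rcases Nat.eq_zero_or_pos n with h0 | hpos
  · subst h0
    exact ⟨1, one_pos, ⟨by ext i; exact absurd i.2 (by omega), fun x => by rw [Finsupp.sum, Finset.eq_empty_of_isEmpty x.support, Finset.sum_empty]⟩⟩
  have : Nonempty (Fin n) := ⟨⟨0, hpos⟩⟩
  set ev := hX.1.eigenvalues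
  obtain ⟨i₀, -, hmin⟩ :=
    Finset.exists_min_image Finset.univ ev ⟨Classical.arbitrary _, Finset.mem_univ _⟩
  refine ⟨ev i₀, hX.eigenvalues_pos i₀, ?_⟩
  have hspec := hX.1.spectral_theorem
  set U : Matrix (Fin n) (Fin n) ℝ := (hX.1.eigenvectorUnitary : Matrix (Fin n) (Fin n) ℝ)
  have hU : U * star U = 1 := (Matrix.mem_unitaryGroup_iff).mp hX.1.eigenvectorUnitary.2
  have h1 : (ev i₀ : ℝ) • (1 : Matrix (Fin n) (Fin n) ℝ) = U * ((ev i₀) • 1) * star U := by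
    rw [Matrix.mul_smul, Matrix.smul_mul, Matrix.mul_one, hU]
  have h2 : X - ev i₀ • 1 = U * (diagonal (RCLike.ofReal ∘ ev) - ev i₀ • 1) * star U := by
    rw [Matrix.mul_sub, Matrix.sub_mul, ← h1, sub_left_inj]
    exact hspec.trans (Unitary.conjStarAlgAut_apply _ _)
  rw [h2]
  have hdiag : (diagonal (RCLike.ofReal ∘ ev) - ev i₀ • (1 : Matrix (Fin n) (Fin n) ℝ))
      = diagonal (fun i => ev i - ev i₀) := by
    ext i j
    rcases eq_or_ne i j with rfl | hij
    · simp [Matrix.one_apply, RCLike.ofReal]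
    · simp [Matrix.one_apply, hij]
  rw [hdiag]
  have hd : (diagonal (fun i => ev i - ev i₀)).PosSemidef :=
    Matrix.posSemidef_diagonal_iff.mpr fun i => sub_nonneg.mpr (hmin i (Finset.mem_univ i))
  simpa [Matrix.star_eq_conjTranspose] using hd.mul_mul_conjTranspose_same U

private lemma quad_rot' (P : Matrix (Fin n) (Fin n) ℝ) (a b : Fin n → ℝ) (μ ν : ℝ) :
    (μ • a - ν • b) ⬝ᵥ (P *ᵥ (μ • a - ν • b)) + (ν • a + μ • b) ⬝ᵥ (P *ᵥ (ν • a + μ • b))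
      = (μ ^ 2 + ν ^ 2) * (a ⬝ᵥ (P *ᵥ a) + b ⬝ᵥ (P *ᵥ b)) := by
  simp only [Matrix.mulVec_add, Matrix.mulVec_sub, Matrix.mulVec_smul, dotProduct_add,
    dotProduct_sub, add_dotProduct, sub_dotProduct, smul_dotProduct,
    dotProduct_smul, smul_eq_mul]
  ring

private lemma cross_bound' {P : Matrix (Fin n) (Fin n) ℝ} (hP : P.PosSemidef) (u δ : Fin n → ℝ)
    {ε : ℝ} (hε : 0 < ε) :
    (1 - ε) * (u ⬝ᵥ (P *ᵥ u)) - ε⁻¹ * (δ ⬝ᵥ (P *ᵥ δ)) ≤ (u + δ) ⬝ᵥ (P *ᵥ (u + δ)) := by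
  have h1 : (0:ℝ) ≤ (ε • u + δ) ⬝ᵥ (P *ᵥ (ε • u + δ)) := by simpa using hP.dotProduct_mulVec_nonneg (ε • u + δ)
  have h2 : (0:ℝ) ≤ δ ⬝ᵥ (P *ᵥ δ) := by simpa using hP.dotProduct_mulVec_nonneg δ
  simp only [Matrix.mulVec_add, Matrix.mulVec_smul, dotProduct_add,
    add_dotProduct, smul_dotProduct, dotProduct_smul, smul_eq_mul] at h1 ⊢
  have key : -(ε * ε * (u ⬝ᵥ (P *ᵥ u))) - δ ⬝ᵥ (P *ᵥ δ) ≤ ε * (u ⬝ᵥ P *ᵥ δ + δ ⬝ᵥ P *ᵥ u) := by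
    nlinarith
  have hinv : 0 < ε⁻¹ := inv_pos.mpr hε
  nlinarith [mul_le_mul_of_nonneg_left key (le_of_lt hinv), mul_inv_cancel₀ (ne_of_gt hε)]

private lemma quad_transfer' (P : Matrix (Fin p) (Fin p) ℝ) (N : Matrix (Fin p) (Fin n) ℝ)
    (x : Fin n → ℝ) :
    x ⬝ᵥ ((Nᵀ * P * N) *ᵥ x) = (N *ᵥ x) ⬝ᵥ (P *ᵥ (N *ᵥ x)) := by
  rw [← Matrix.mulVec_mulVec, ← Matrix.mulVec_mulVec, Matrix.dotProduct_mulVec,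
    Matrix.vecMul_transpose]

end Aux

private lemma exists_unit_eigen' {n : ℕ} {M : Matrix (Fin n) (Fin n) ℝ} (h : specRad M = 1) :
    ∃ (lam : ℂ) (v : Fin n → ℂ), ‖lam‖ = 1 ∧ v ≠ 0 ∧
      (M.map (algebraMap ℝ ℂ)) *ᵥ v = lam • v := by
  set Mc := M.map (algebraMap ℝ ℂ)
  set S := (fun z : ℂ => ‖z‖) '' spectrum ℂ Mc with hS
  have hfin : S.Finite := (Matrix.finite_spectrum Mc).image _
  have hne : S.Nonempty := by
    by_contra hc
    rw [Set.not_nonempty_iff_eq_empty] at hc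
    rw [specRad, ← hS, hc, Real.sSup_empty] at h
    norm_num at h
  have hmem : sSup S ∈ S := hne.csSup_mem hfin
  rw [show sSup S = 1 from h] at hmem
  obtain ⟨lam, hlam, hnorm⟩ := hmem
  have hmem2 : lam ∈ spectrum ℂ (Matrix.toLinAlgEquiv' Mc) := by
    rwa [AlgEquiv.spectrum_eq]
  have hev : Module.End.HasEigenvalue (Matrix.toLinAlgEquiv' Mc : Module.End ℂ (Fin n → ℂ)) lam :=
    Module.End.hasEigenvalue_iff_mem_spectrum.mpr hmem2
  obtain ⟨v, hv⟩ := hev.exists_hasEigenvector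
  refine ⟨lam, v, hnorm, hv.2, ?_⟩
  have happ := hv.apply_eq_smul
  rwa [show (Matrix.toLinAlgEquiv' Mc : _) v = Mc *ᵥ v from Matrix.toLin'_apply Mc v] at happ

private lemma real_im_eigen' {n : ℕ} {M : Matrix (Fin n) (Fin n) ℝ} {lam : ℂ} {v : Fin n → ℂ}
    (hv : (M.map (algebraMap ℝ ℂ)) *ᵥ v = lam • v) :
    M *ᵥ (fun j => (v j).re) = lam.re • (fun j => (v j).re) - lam.im • (fun j => (v j).im)
    ∧ M *ᵥ (fun j => (v j).im) = lam.im • (fun j => (v j).re) + lam.re • (fun j => (v j).im) := by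
  constructor
  · funext j
    have h := congrArg Complex.re (congrFun hv j)
    simpa [Matrix.mulVec, dotProduct, Complex.re_sum, Matrix.map_apply,
      Complex.mul_re, mul_comm, sub_eq_add_neg] using h
  · funext j
    have h := congrArg Complex.im (congrFun hv j)
    simpa [Matrix.mulVec, dotProduct, Complex.im_sum, Matrix.map_apply,
      Complex.mul_im, mul_comm, add_comm] using h


set_option maxHeartbeats 1000000

/-- Coercivity at the stability boundary: if stabilizing gains `K i` converge to a
gain on the boundary (`ρ(A−BKC) = 1`), then the LQR costs `J(K i) = Tr(P_{K i} X₀)`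
blow up to `+∞`. -/
theorem coercive_at_boundary {n m d : ℕ}
    (A : Matrix (Fin n) (Fin n) ℝ) (B : Matrix (Fin n) (Fin m) ℝ)
    (C : Matrix (Fin d) (Fin n) ℝ)
    (Q X₀ : Matrix (Fin n) (Fin n) ℝ) (R : Matrix (Fin m) (Fin m) ℝ)
    (hQ : Q.PosDef) (hR : R.PosDef) (hX₀ : X₀.PosDef)
    (K : ℕ → Matrix (Fin m) (Fin d) ℝ) (Klim : Matrix (Fin m) (Fin d) ℝ)
    (hstab : ∀ i, specRad (A - B * K i * C) < 1)
    (hconv : Tendsto K atTop (𝓝 Klim))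
    (hbdry : specRad (A - B * Klim * C) = 1)
    (P : ℕ → Matrix (Fin n) (Fin n) ℝ)
    (hPpos : ∀ i, (P i).PosDef)
    (hP : ∀ i, P i = Q + Cᵀ * (K i)ᵀ * R * (K i) * C +
      (A - B * K i * C)ᵀ * P i * (A - B * K i * C)) :
    Tendsto (fun i => ((P i) * X₀).trace) atTop atTop := by
  classical
  obtain ⟨lam, v, hnorm, hv0, hv⟩ := exists_unit_eigen' hbdry
  set Minf := A - B * Klim * C with hMinf
  set a : Fin n → ℝ := fun j => (v j).re with hadef
  set b : Fin n → ℝ := fun j => (v j).im with hbdef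
  obtain ⟨ha, hb⟩ := real_im_eigen' hv
  have hl2 : lam.re ^ 2 + lam.im ^ 2 = 1 := by
    have h1 : ‖lam‖ ^ 2 = 1 := by rw [hnorm]; norm_num
    rw [Complex.sq_norm, Complex.normSq_apply] at h1
    nlinarith
  have hself : ∀ w : Fin n → ℝ, 0 ≤ w ⬝ᵥ w := by
    intro w
    unfold dotProduct
    exact Finset.sum_nonneg fun k _ => mul_self_nonneg _
  have hab : a ≠ 0 ∨ b ≠ 0 := by
    by_contra hc
    push_neg at hc
    apply hv0
    funext j
    have h1 : a j = 0 := by rw [hc.1]; rfl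
    have h2 : b j = 0 := by rw [hc.2]; rfl
    exact Complex.ext h1 h2
  set qQ : ℝ := a ⬝ᵥ (Q *ᵥ a) + b ⬝ᵥ (Q *ᵥ b) with hqQdef
  have hqQpos : 0 < qQ := by
    rcases hab with h | h
    · exact add_pos_of_pos_of_nonneg (by simpa using hQ.dotProduct_mulVec_pos h)
        (psd_quad_nonneg' hQ.posSemidef b)
    · exact add_pos_of_nonneg_of_pos (psd_quad_nonneg' hQ.posSemidef a)
        (by simpa using hQ.dotProduct_mulVec_pos h)
  set c₂ : ℝ := a ⬝ᵥ a + b ⬝ᵥ b with hc₂def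
  have hc₂ : 0 ≤ c₂ := add_nonneg (hself a) (hself b)
  obtain ⟨c₀, hc₀, hX₀c⟩ := posdef_exists_smul_le' hX₀
  set Mi : ℕ → Matrix (Fin n) (Fin n) ℝ := fun i => A - B * K i * C with hMidef
  set da : ℕ → (Fin n → ℝ) := fun i => Mi i *ᵥ a - Minf *ᵥ a with hdadef
  set db : ℕ → (Fin n → ℝ) := fun i => Mi i *ᵥ b - Minf *ᵥ b with hdbdef
  set dd : ℕ → ℝ := fun i => da i ⬝ᵥ da i + db i ⬝ᵥ db i with hdddef
  set T : ℕ → ℝ := fun i => (P i).trace with hTdef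
  set s : ℕ → ℝ := fun i => a ⬝ᵥ (P i *ᵥ a) + b ⬝ᵥ (P i *ᵥ b) with hsdef
  have hPsd : ∀ i, (P i).PosSemidef := fun i => (hPpos i).posSemidef
  have hTnn : ∀ i, 0 ≤ T i := fun i => psd_trace_nonneg' (hPsd i)
  have hsnn : ∀ i, 0 ≤ s i := fun i =>
    add_nonneg (psd_quad_nonneg' (hPsd i) a) (psd_quad_nonneg' (hPsd i) b)
  have hsT : ∀ i, s i ≤ c₂ * T i := by
    intro i
    have h1 := quad_le_trace' (hPsd i) a
    have h2 := quad_le_trace' (hPsd i) b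
    show a ⬝ᵥ (P i *ᵥ a) + b ⬝ᵥ (P i *ᵥ b) ≤ (a ⬝ᵥ a + b ⬝ᵥ b) * (P i).trace
    nlinarith
  have hDT : ∀ i, da i ⬝ᵥ (P i *ᵥ da i) + db i ⬝ᵥ (P i *ᵥ db i) ≤ T i * dd i := by
    intro i
    have h1 := quad_le_trace' (hPsd i) (da i)
    have h2 := quad_le_trace' (hPsd i) (db i)
    show _ ≤ (P i).trace * (da i ⬝ᵥ da i + db i ⬝ᵥ db i)
    nlinarith
  have key : ∀ i, ∀ ε : ℝ, 0 < ε → qQ ≤ ε * s i + ε⁻¹ * (T i * dd i) := by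
    intro i ε hε
    have hGpsd : (Cᵀ * (K i)ᵀ * R * (K i) * C).PosSemidef := by
      have h := hR.posSemidef.conjTranspose_mul_mul_same (K i * C)
      simpa [Matrix.conjTranspose_mul, Matrix.mul_assoc] using h
    have heq : ∀ x : Fin n → ℝ, x ⬝ᵥ (P i *ᵥ x)
        = x ⬝ᵥ (Q *ᵥ x) + x ⬝ᵥ ((Cᵀ * (K i)ᵀ * R * (K i) * C) *ᵥ x)
          + (Mi i *ᵥ x) ⬝ᵥ (P i *ᵥ (Mi i *ᵥ x)) := by
      intro x
      conv_lhs => rw [hP i]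
      rw [Matrix.add_mulVec, Matrix.add_mulVec, dotProduct_add, dotProduct_add]
      rw [show (A - B * K i * C) = Mi i from rfl, quad_transfer' (P i) (Mi i) x]
    have hx : ∀ x : Fin n → ℝ,
        x ⬝ᵥ (Q *ᵥ x) + (Mi i *ᵥ x) ⬝ᵥ (P i *ᵥ (Mi i *ᵥ x)) ≤ x ⬝ᵥ (P i *ᵥ x) := by
      intro x
      have hg := psd_quad_nonneg' hGpsd x
      rw [heq x]
      linarith
    have hua : Mi i *ᵥ a = Minf *ᵥ a + da i := by simp [hdadef]
    have hub : Mi i *ᵥ b = Minf *ᵥ b + db i := by simp [hdbdef]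
    have hca := cross_bound' (hPsd i) (Minf *ᵥ a) (da i) hε
    have hcb := cross_bound' (hPsd i) (Minf *ᵥ b) (db i) hε
    rw [← hua] at hca
    rw [← hub] at hcb
    have hrot' : (Minf *ᵥ a) ⬝ᵥ (P i *ᵥ (Minf *ᵥ a)) + (Minf *ᵥ b) ⬝ᵥ (P i *ᵥ (Minf *ᵥ b))
        = a ⬝ᵥ (P i *ᵥ a) + b ⬝ᵥ (P i *ᵥ b) := by
      rw [ha, hb, quad_rot', hl2, one_mul]
    have hεrot : ε * ((Minf *ᵥ a) ⬝ᵥ (P i *ᵥ (Minf *ᵥ a)) + (Minf *ᵥ b) ⬝ᵥ (P i *ᵥ (Minf *ᵥ b)))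
        = ε * (a ⬝ᵥ (P i *ᵥ a) + b ⬝ᵥ (P i *ᵥ b)) := by rw [hrot']
    have hεinv : 0 < ε⁻¹ := inv_pos.mpr hε
    have hmul : ε⁻¹ * (da i ⬝ᵥ (P i *ᵥ da i) + db i ⬝ᵥ (P i *ᵥ db i)) ≤ ε⁻¹ * (T i * dd i) :=
      mul_le_mul_of_nonneg_left (hDT i) hεinv.le
    have hXa := hx a
    have hXb := hx b
    show a ⬝ᵥ (Q *ᵥ a) + b ⬝ᵥ (Q *ᵥ b)
      ≤ ε * (a ⬝ᵥ (P i *ᵥ a) + b ⬝ᵥ (P i *ᵥ b)) + ε⁻¹ * (T i * dd i)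
    nlinarith [hca, hcb, hXa, hXb, hmul, hεrot, hrot']
  have hdpos : ∀ i, 0 < dd i := by
    intro i
    have hnn : 0 ≤ dd i := add_nonneg (hself _) (hself _)
    rcases hnn.lt_or_eq with h | h
    · exact h
    exfalso
    have hε : 0 < qQ / (2 * (s i + 1)) := by
      apply div_pos hqQpos
      nlinarith [hsnn i]
    have hk := key i _ hε
    rw [← h] at hk
    simp only [mul_zero, add_zero] at hk
    have h2 : qQ / (2 * (s i + 1)) * s i < qQ := by
      rw [div_mul_eq_mul_div, div_lt_iff₀ (by nlinarith [hsnn i])]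
      nlinarith [hsnn i, hqQpos]
    linarith
  have hT : ∀ i, qQ / ((c₂ + 1) * Real.sqrt (dd i)) ≤ T i := by
    intro i
    have hs0 : 0 < Real.sqrt (dd i) := Real.sqrt_pos.mpr (hdpos i)
    have hss : Real.sqrt (dd i) * Real.sqrt (dd i) = dd i := Real.mul_self_sqrt (hdpos i).le
    have hkey := key i (Real.sqrt (dd i)) hs0
    have h1 : (Real.sqrt (dd i))⁻¹ * (T i * dd i) = Real.sqrt (dd i) * T i := by
      rw [inv_mul_eq_div, div_eq_iff hs0.ne']
      linear_combination (-(T i)) * hss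
    rw [h1] at hkey
    rw [div_le_iff₀ (by positivity)]
    nlinarith [hsT i, hTnn i, hs0, hkey,
      mul_le_mul_of_nonneg_left (hsT i) hs0.le]
  have htr : ∀ i, c₀ * T i ≤ ((P i) * X₀).trace := by
    intro i
    have h0 : 0 ≤ ((P i) * (X₀ - c₀ • 1)).trace := psd_trace_mul_nonneg' (hPsd i) hX₀c
    rw [Matrix.mul_sub, Matrix.trace_sub, Matrix.mul_smul, Matrix.trace_smul, Matrix.mul_one,
      smul_eq_mul] at h0
    show c₀ * (P i).trace ≤ _
    linarith
  have hcont1 : Continuous (fun X : Matrix (Fin m) (Fin d) ℝ => A - B * X * C) :=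
    continuous_const.sub ((continuous_const.matrix_mul continuous_id).matrix_mul continuous_const)
  have hM : Tendsto Mi atTop (𝓝 Minf) := (hcont1.tendsto Klim).comp hconv
  have hcont2 : Continuous (fun N : Matrix (Fin n) (Fin n) ℝ =>
      (N *ᵥ a - Minf *ᵥ a) ⬝ᵥ (N *ᵥ a - Minf *ᵥ a)
        + (N *ᵥ b - Minf *ᵥ b) ⬝ᵥ (N *ᵥ b - Minf *ᵥ b)) := by
    apply Continuous.add <;> apply Continuous.dotProduct <;>
      exact (Continuous.matrix_mulVec continuous_id continuous_const).sub continuous_const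
  have hdd0 : Tendsto dd atTop (𝓝 0) := by
    have h := (hcont2.tendsto Minf).comp hM
    simp only [sub_self, zero_dotProduct, add_zero] at h
    exact h
  have hsqrt : Tendsto (fun i => Real.sqrt (dd i)) atTop (𝓝[>] (0:ℝ)) := by
    rw [tendsto_nhdsWithin_iff]
    constructor
    · have h := (Real.continuous_sqrt.tendsto 0).comp hdd0
      simpa [Function.comp_def] using h
    · exact Eventually.of_forall fun i => Set.mem_Ioi.mpr (Real.sqrt_pos.mpr (hdpos i))
  have hinvT : Tendsto (fun i => (Real.sqrt (dd i))⁻¹) atTop atTop :=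
    tendsto_inv_nhdsGT_zero.comp hsqrt
  have hLT : Tendsto (fun i => (c₀ * qQ / (c₂ + 1)) * (Real.sqrt (dd i))⁻¹) atTop atTop :=
    hinvT.const_mul_atTop (by positivity)
  refine tendsto_atTop_mono (fun i => ?_) hLT
  have hs0 : 0 < Real.sqrt (dd i) := Real.sqrt_pos.mpr (hdpos i)
  have e1 : (c₀ * qQ / (c₂ + 1)) * (Real.sqrt (dd i))⁻¹
      = c₀ * (qQ / ((c₂ + 1) * Real.sqrt (dd i))) := by
    field_simp
  rw [e1]
  calc c₀ * (qQ / ((c₂ + 1) * Real.sqrt (dd i))) ≤ c₀ * T i :=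
        mul_le_mul_of_nonneg_left (hT i) hc₀.le
    _ ≤ ((P i) * X₀).trace := htr i
end

section
/- Performance difference lemma: for two stabilizing gains K, K' ∈ 𝕂, J(K') − J(K) = 2 Tr(Σ_{K'} (K'C − KC)ᵀ E_K) + Tr(Σ_{K'} (K'C − KC)ᵀ (R + Bᵀ P_K B)(K'C − KC)), where E_K = (R + Bᵀ P_K B)KC − Bᵀ P_K A. -/
open Matrix Filter Topology

/-- Performance difference lemma for the SOF LQR cost. -/
theorem performance_difference {n m d : ℕ}
    (A : Matrix (Fin n) (Fin n) ℝ) (B : Matrix (Fin n) (Fin m) ℝ)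
    (C : Matrix (Fin d) (Fin n) ℝ) (K K' : Matrix (Fin m) (Fin d) ℝ)
    (Q X₀ : Matrix (Fin n) (Fin n) ℝ) (R : Matrix (Fin m) (Fin m) ℝ)
    (hQ : Q.PosDef) (hR : R.PosDef) (hX₀ : X₀.PosDef)
    (hK : specRad (A - B * K * C) < 1) (hK' : specRad (A - B * K' * C) < 1)
    (P P' S' : Matrix (Fin n) (Fin n) ℝ)
    (hPpos : P.PosDef)
    (hP : P = Q + Cᵀ * Kᵀ * R * K * C + (A - B * K * C)ᵀ * P * (A - B * K * C))
    (hP'pos : P'.PosDef)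
    (hP' : P' = Q + Cᵀ * K'ᵀ * R * K' * C + (A - B * K' * C)ᵀ * P' * (A - B * K' * C))
    (hS'pos : S'.PosDef)
    (hS' : S' = X₀ + (A - B * K' * C) * S' * (A - B * K' * C)ᵀ) :
    (P' * X₀).trace - (P * X₀).trace =
      2 * (S' * (K' * C - K * C)ᵀ * ((R + Bᵀ * P * B) * K * C - Bᵀ * P * A)).trace +
      (S' * (K' * C - K * C)ᵀ * (R + Bᵀ * P * B) * (K' * C - K * C)).trace := by
  have hPt : Pᵀ = P := by simpa using hPpos.isHermitian.eq
  have hRt : Rᵀ = R := by simpa using hR.isHermitian.eq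
  have hS't : S'ᵀ = S' := by simpa using hS'pos.isHermitian.eq
  -- key Lyapunov-difference identity
  have key : P' - P - (A - B * K' * C)ᵀ * (P' - P) * (A - B * K' * C) =
      (K' * C - K * C)ᵀ * ((R + Bᵀ * P * B) * K * C - Bᵀ * P * A) +
      ((R + Bᵀ * P * B) * K * C - Bᵀ * P * A)ᵀ * (K' * C - K * C) +
      (K' * C - K * C)ᵀ * (R + Bᵀ * P * B) * (K' * C - K * C) := by
    nth_rewrite 1 [hP', hP]
    simp only [Matrix.transpose_sub, Matrix.transpose_mul, Matrix.transpose_add,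
      Matrix.transpose_transpose, hPt, hRt]
    simp only [Matrix.mul_add, Matrix.add_mul, Matrix.mul_sub, Matrix.sub_mul, Matrix.mul_assoc]
    abel
  have hX : X₀ = S' - (A - B * K' * C) * S' * (A - B * K' * C)ᵀ := by
    rw [eq_sub_iff_add_eq]
    exact hS'.symm
  have h2 : ((P' - P) * ((A - B * K' * C) * S' * (A - B * K' * C)ᵀ)).trace
      = ((A - B * K' * C)ᵀ * (P' - P) * (A - B * K' * C) * S').trace := by
    rw [show (P' - P) * ((A - B * K' * C) * S' * (A - B * K' * C)ᵀ)
        = ((P' - P) * (A - B * K' * C) * S') * (A - B * K' * C)ᵀ by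
      simp [Matrix.mul_assoc], Matrix.trace_mul_comm]
    simp [Matrix.mul_assoc]
  have tr1 : (P' * X₀).trace - (P * X₀).trace
      = ((P' - P - (A - B * K' * C)ᵀ * (P' - P) * (A - B * K' * C)) * S').trace := by
    rw [hX]
    calc (P' * (S' - (A - B * K' * C) * S' * (A - B * K' * C)ᵀ)).trace
          - (P * (S' - (A - B * K' * C) * S' * (A - B * K' * C)ᵀ)).trace
        = ((P' - P) * S').trace
          - ((P' - P) * ((A - B * K' * C) * S' * (A - B * K' * C)ᵀ)).trace := by
          simp only [Matrix.sub_mul, Matrix.mul_sub, Matrix.trace_sub]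
          ring
      _ = ((P' - P) * S').trace
          - ((A - B * K' * C)ᵀ * (P' - P) * (A - B * K' * C) * S').trace := by rw [h2]
      _ = _ := by simp only [Matrix.sub_mul, Matrix.trace_sub]
  rw [tr1, key]
  have hsym : (((R + Bᵀ * P * B) * K * C - Bᵀ * P * A)ᵀ * (K' * C - K * C) * S').trace
      = ((K' * C - K * C)ᵀ * ((R + Bᵀ * P * B) * K * C - Bᵀ * P * A) * S').trace := by
    rw [← Matrix.trace_transpose (((R + Bᵀ * P * B) * K * C - Bᵀ * P * A)ᵀ
      * (K' * C - K * C) * S')]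
    rw [show (((R + Bᵀ * P * B) * K * C - Bᵀ * P * A)ᵀ * (K' * C - K * C) * S')ᵀ
        = S'ᵀ * ((K' * C - K * C)ᵀ * ((R + Bᵀ * P * B) * K * C - Bᵀ * P * A)) by
      simp [Matrix.transpose_mul, Matrix.mul_assoc], hS't, Matrix.trace_mul_comm]
  have hc1 : ((K' * C - K * C)ᵀ * ((R + Bᵀ * P * B) * K * C - Bᵀ * P * A) * S').trace
      = (S' * (K' * C - K * C)ᵀ * ((R + Bᵀ * P * B) * K * C - Bᵀ * P * A)).trace := by
    rw [Matrix.trace_mul_comm]; simp [Matrix.mul_assoc]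
  have hc2 : ((K' * C - K * C)ᵀ * (R + Bᵀ * P * B) * (K' * C - K * C) * S').trace
      = (S' * (K' * C - K * C)ᵀ * (R + Bᵀ * P * B) * (K' * C - K * C)).trace := by
    rw [Matrix.trace_mul_comm]; simp [Matrix.mul_assoc]
  have split : ∀ X Y Z : Matrix (Fin n) (Fin n) ℝ,
      ((X + Y + Z) * S').trace = (X * S').trace + (Y * S').trace + (Z * S').trace := by
    intro X Y Z
    simp [Matrix.add_mul]
  rw [split, hsym, hc1, hc2]
  ring
end

section
/- Gradient dominance upper bound: let K* be a global minimizer of the SOF cost J over 𝕂. For any K ∈ 𝕂, J(K) − J(K*) ≤ ‖Σ_{K*}‖ · Tr(E_Kᵀ E_K) / λ_min(R), where E_K = (R + BᵀP_K B)KC − BᵀP_K A. -/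
open Matrix Filter Topology

section Aux

lemma SOF.trace_row_quad {k n : ℕ} (Y : Matrix (Fin k) (Fin n) ℝ) (N : Matrix (Fin n) (Fin n) ℝ) :
    (Y * N * Yᵀ).trace = ∑ i, (fun j => Y i j) ⬝ᵥ N *ᵥ (fun j => Y i j) := by
  simp only [Matrix.trace, Matrix.diag, Matrix.mul_apply, Matrix.transpose_apply,
    dotProduct, Matrix.mulVec, Finset.sum_mul, Finset.mul_sum]
  refine Finset.sum_congr rfl fun i _ => ?_
  rw [Finset.sum_comm]
  refine Finset.sum_congr rfl fun j _ => Finset.sum_congr rfl fun l _ => by ring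

lemma SOF.trace_quad_nonneg {k n : ℕ} (Y : Matrix (Fin k) (Fin n) ℝ)
    {N : Matrix (Fin n) (Fin n) ℝ}
    (hN : N.PosSemidef) : 0 ≤ (Y * N * Yᵀ).trace := by
  rw [SOF.trace_row_quad]
  exact Finset.sum_nonneg fun i _ => by simpa using hN.dotProduct_mulVec_nonneg (fun j => Y i j)

lemma SOF.trace_quad_le {k n : ℕ} (Y : Matrix (Fin k) (Fin n) ℝ) (N : Matrix (Fin n) (Fin n) ℝ)
    (c : ℝ) (hc : ∀ v : Fin n → ℝ, v ⬝ᵥ N *ᵥ v ≤ c * (v ⬝ᵥ v)) :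
    (Y * N * Yᵀ).trace ≤ c * (Y * Yᵀ).trace := by
  have h1 : (Y * Yᵀ).trace = (Y * (1 : Matrix (Fin n) (Fin n) ℝ) * Yᵀ).trace := by
    rw [Matrix.mul_one]
  rw [SOF.trace_row_quad, h1, SOF.trace_row_quad, Finset.mul_sum]
  refine Finset.sum_le_sum fun i _ => ?_
  simpa using hc (fun j => Y i j)

lemma SOF.specNorm_quad {n : ℕ} (S : Matrix (Fin n) (Fin n) ℝ) (v : Fin n → ℝ) :
    v ⬝ᵥ S *ᵥ v ≤ specNorm S * (v ⬝ᵥ v) := by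
  rw [specNorm]
  set L := LinearMap.toContinuousLinearMap (Matrix.toEuclideanLin S)
  set w : EuclideanSpace ℝ (Fin n) := (WithLp.equiv 2 _).symm v
  have h1 : v ⬝ᵥ S *ᵥ v = inner (𝕜 := ℝ) (L w) w := by
    simp [L, w, Matrix.toEuclideanLin_apply, PiLp.inner_apply, dotProduct, RCLike.inner_apply,
      mul_comm]
  have h2 : inner (𝕜 := ℝ) (L w) w ≤ ‖L w‖ * ‖w‖ := real_inner_le_norm _ _
  have h3 : ‖L w‖ ≤ ‖L‖ * ‖w‖ := L.le_opNorm w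
  have h4 : ‖w‖ * ‖w‖ = v ⬝ᵥ v := by
    rw [← real_inner_self_eq_norm_mul_norm]
    simp [w, PiLp.inner_apply, dotProduct, RCLike.inner_apply]
    rw [EuclideanSpace.norm_sq_eq]
    exact Finset.sum_congr rfl fun i _ => by simp [sq, Real.norm_eq_abs]
  nlinarith [norm_nonneg w, norm_nonneg (L w), norm_nonneg L]

lemma SOF.lambdaMin_le_eig {m : ℕ} {R : Matrix (Fin m) (Fin m) ℝ} (hR : R.IsHermitian)
    (i : Fin m) : lambdaMin R ≤ hR.eigenvalues i :=
  csInf_le (Matrix.finite_real_spectrum (A := R)).bddBelow (hR.eigenvalues_mem_spectrum_real i)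

lemma SOF.lambdaMin_pos {m : ℕ} (hm : 0 < m) {R : Matrix (Fin m) (Fin m) ℝ} (hR : R.PosDef) :
    0 < lambdaMin R := by
  have hne : (spectrum ℝ R).Nonempty := by
    rw [hR.isHermitian.spectrum_real_eq_range_eigenvalues]
    exact ⟨_, ⟨⟨0, hm⟩, rfl⟩⟩
  have hmem : lambdaMin R ∈ spectrum ℝ R :=
    hne.csInf_mem (Matrix.finite_real_spectrum (A := R))
  rw [hR.isHermitian.spectrum_real_eq_range_eigenvalues] at hmem
  obtain ⟨i, hi⟩ := hmem
  have hpos := hR.eigenvalues_pos i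
  rw [hi] at hpos
  exact hpos

lemma SOF.psd_sub_lambdaMin {m : ℕ} {R : Matrix (Fin m) (Fin m) ℝ} (hR : R.IsHermitian) :
    (R - lambdaMin R • 1).PosSemidef := by
  set U : Matrix (Fin m) (Fin m) ℝ := (hR.eigenvectorUnitary : Matrix (Fin m) (Fin m) ℝ)
  have hU : U * star U = 1 := Matrix.mem_unitaryGroup_iff.mp hR.eigenvectorUnitary.2
  have key : R - lambdaMin R • 1 =
      U * Matrix.diagonal (fun i => hR.eigenvalues i - lambdaMin R) * star U := by
    have hdiag : Matrix.diagonal (fun i => hR.eigenvalues i - lambdaMin R)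
        = Matrix.diagonal (RCLike.ofReal ∘ hR.eigenvalues) - lambdaMin R • 1 := by
      ext i j
      rcases eq_or_ne i j with h | h
      · subst h; simp [Matrix.diagonal_apply_eq, Matrix.one_apply_eq]
      · simp [Matrix.diagonal_apply_ne _ h, Matrix.one_apply_ne h]
    have hspec : R = U * Matrix.diagonal (RCLike.ofReal ∘ hR.eigenvalues) * star U :=
      hR.spectral_theorem
    rw [hdiag, Matrix.mul_sub, Matrix.sub_mul, ← hspec]
    congr 1
    rw [Matrix.mul_smul, Matrix.mul_one, Matrix.smul_mul, hU]
  rw [key]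
  exact (Matrix.PosSemidef.diagonal fun i =>
    sub_nonneg.2 (SOF.lambdaMin_le_eig hR i)).mul_mul_conjTranspose_same U

lemma SOF.lambdaMin_quad {m : ℕ} {R : Matrix (Fin m) (Fin m) ℝ} (hR : R.IsHermitian)
    (v : Fin m → ℝ) : lambdaMin R * (v ⬝ᵥ v) ≤ v ⬝ᵥ R *ᵥ v := by
  have h := (SOF.psd_sub_lambdaMin hR).dotProduct_mulVec_nonneg v
  simp only [Matrix.sub_mulVec, Matrix.smul_mulVec, Matrix.one_mulVec, dotProduct_sub,
    dotProduct_smul, star_trivial, smul_eq_mul] at h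
  linarith

lemma SOF.dot_self_nonneg {m : ℕ} (v : Fin m → ℝ) : 0 ≤ v ⬝ᵥ v :=
  Finset.sum_nonneg fun _ _ => mul_self_nonneg _

lemma SOF.inv_quad_bound {m : ℕ} {M : Matrix (Fin m) (Fin m) ℝ} (hM : M.PosDef)
    {lam : ℝ} (hlam : 0 < lam) (hq : ∀ v : Fin m → ℝ, lam * (v ⬝ᵥ v) ≤ v ⬝ᵥ M *ᵥ v)
    (v : Fin m → ℝ) : v ⬝ᵥ M⁻¹ *ᵥ v ≤ lam⁻¹ * (v ⬝ᵥ v) := by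
  set w : Fin m → ℝ := M⁻¹ *ᵥ v with hw
  have hMw : M *ᵥ w = v := by
    rw [hw, Matrix.mulVec_mulVec, Matrix.mul_nonsing_inv _ (isUnit_iff_ne_zero.2 hM.det_pos.ne'),
      Matrix.one_mulVec]
  have h1 : lam * (w ⬝ᵥ w) ≤ w ⬝ᵥ v := by rw [← hMw]; exact hq w
  have hcs : (v ⬝ᵥ w) ^ 2 ≤ (v ⬝ᵥ v) * (w ⬝ᵥ w) := by
    simpa [dotProduct, sq] using Finset.sum_mul_sq_le_sq_mul_sq Finset.univ v w
  have hvw : w ⬝ᵥ v = v ⬝ᵥ w := dotProduct_comm _ _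
  have hvv : 0 ≤ v ⬝ᵥ v := SOF.dot_self_nonneg v
  have hww : 0 ≤ w ⬝ᵥ w := SOF.dot_self_nonneg w
  rw [hvw] at h1
  rcases le_or_gt (v ⬝ᵥ w) 0 with ht | ht
  · exact ht.trans (by positivity)
  · have key : lam * (v ⬝ᵥ w) ≤ v ⬝ᵥ v := by
      nlinarith [mul_le_mul_of_nonneg_left h1 hvv, mul_le_mul_of_nonneg_left hcs hlam.le]
    rw [inv_mul_eq_div, le_div_iff₀ hlam, mul_comm]
    exact key

lemma SOF.complete_square {n m : ℕ} (Mm : Matrix (Fin m) (Fin m) ℝ) (hMsym : Mmᵀ = Mm)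
    (hinv : Mm⁻¹ * Mm = 1) (hinv2 : Mm * Mm⁻¹ = 1)
    (D E : Matrix (Fin m) (Fin n) ℝ) :
    (Mm * D + E)ᵀ * Mm⁻¹ * (Mm * D + E) =
      Dᵀ * Mm * D + Dᵀ * E + Eᵀ * D + Eᵀ * Mm⁻¹ * E := by
  have h1 : Mm⁻¹ * (Mm * D) = D := by rw [← Matrix.mul_assoc, hinv, Matrix.one_mul]
  calc (Mm * D + E)ᵀ * Mm⁻¹ * (Mm * D + E)
      = (Dᵀ * Mm + Eᵀ) * (Mm⁻¹ * (Mm * D) + Mm⁻¹ * E) := by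
        rw [Matrix.transpose_add, Matrix.transpose_mul, hMsym, Matrix.mul_assoc, Matrix.mul_add]
    _ = (Dᵀ * Mm + Eᵀ) * (D + Mm⁻¹ * E) := by rw [h1]
    _ = Dᵀ * Mm * D + Dᵀ * E + Eᵀ * D + Eᵀ * Mm⁻¹ * E := by
        rw [Matrix.add_mul, Matrix.mul_add, Matrix.mul_add]
        have h2 : Dᵀ * Mm * (Mm⁻¹ * E) = Dᵀ * E := by
          rw [Matrix.mul_assoc Dᵀ Mm, ← Matrix.mul_assoc Mm, hinv2, Matrix.one_mul]
        have h3 : Eᵀ * (Mm⁻¹ * E) = Eᵀ * Mm⁻¹ * E := (Matrix.mul_assoc _ _ _).symm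
        rw [h2, h3]; abel

lemma SOF.delta_eq {n m d : ℕ} (A : Matrix (Fin n) (Fin n) ℝ) (B : Matrix (Fin n) (Fin m) ℝ)
    (C : Matrix (Fin d) (Fin n) ℝ) (Q : Matrix (Fin n) (Fin n) ℝ)
    (R : Matrix (Fin m) (Fin m) ℝ) (hRsym : Rᵀ = R)
    (Pk : Matrix (Fin n) (Fin n) ℝ) (hPsym : Pkᵀ = Pk) (K Ks : Matrix (Fin m) (Fin d) ℝ)
    (hPkeq : Pk = Q + Cᵀ * Kᵀ * R * K * C + (A - B * K * C)ᵀ * Pk * (A - B * K * C)) :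
    Pk - (Q + Cᵀ * Ksᵀ * R * Ks * C + (A - B * Ks * C)ᵀ * Pk * (A - B * Ks * C)) =
      -((Ks * C - K * C)ᵀ * (R + Bᵀ * Pk * B) * (Ks * C - K * C) +
        (Ks * C - K * C)ᵀ * ((R + Bᵀ * Pk * B) * K * C - Bᵀ * Pk * A) +
        ((R + Bᵀ * Pk * B) * K * C - Bᵀ * Pk * A)ᵀ * (Ks * C - K * C)) := by
  nth_rewrite 1 [hPkeq]
  simp only [Matrix.transpose_sub, Matrix.transpose_add, Matrix.transpose_mul,
    Matrix.transpose_transpose, hRsym, hPsym]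
  simp only [Matrix.mul_sub, Matrix.sub_mul, Matrix.mul_add, Matrix.add_mul, Matrix.mul_assoc]
  abel

end Aux

/-- Gradient dominance upper bound:
`J(K) − J(K*) ≤ ‖Σ_{K*}‖ Tr(E_Kᵀ E_K) / λ_min(R)` for a global minimizer `K*`. -/
theorem gradient_dominance_upper {n m d : ℕ}
    (A : Matrix (Fin n) (Fin n) ℝ) (B : Matrix (Fin n) (Fin m) ℝ)
    (C : Matrix (Fin d) (Fin n) ℝ)
    (Q X₀ : Matrix (Fin n) (Fin n) ℝ) (R : Matrix (Fin m) (Fin m) ℝ)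
    (hQ : Q.PosDef) (hR : R.PosDef) (hX₀ : X₀.PosDef)
    (P : Matrix (Fin m) (Fin d) ℝ → Matrix (Fin n) (Fin n) ℝ)
    (hP : ∀ K, specRad (A - B * K * C) < 1 → (P K).PosDef ∧
      P K = Q + Cᵀ * Kᵀ * R * K * C + (A - B * K * C)ᵀ * P K * (A - B * K * C))
    (Kstar : Matrix (Fin m) (Fin d) ℝ)
    (hKstar : specRad (A - B * Kstar * C) < 1)
    (hmin : ∀ K, specRad (A - B * K * C) < 1 →
      (P Kstar * X₀).trace ≤ (P K * X₀).trace)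
    (Sstar : Matrix (Fin n) (Fin n) ℝ) (hSstarpos : Sstar.PosDef)
    (hSstar : Sstar = X₀ + (A - B * Kstar * C) * Sstar * (A - B * Kstar * C)ᵀ)
    (K : Matrix (Fin m) (Fin d) ℝ) (hK : specRad (A - B * K * C) < 1) :
    (P K * X₀).trace - (P Kstar * X₀).trace ≤
      specNorm Sstar *
        (((R + Bᵀ * P K * B) * K * C - Bᵀ * P K * A)ᵀ *
          ((R + Bᵀ * P K * B) * K * C - Bᵀ * P K * A)).trace / lambdaMin R := by
  rcases Nat.eq_zero_or_pos m with hm | hm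
  · -- trivial case `m = 0`
    subst hm
    have hE0 : (((R + Bᵀ * P K * B) * K * C - Bᵀ * P K * A)ᵀ *
        ((R + Bᵀ * P K * B) * K * C - Bᵀ * P K * A)).trace = 0 := by
      have : ∀ i j, (((R + Bᵀ * P K * B) * K * C - Bᵀ * P K * A)ᵀ *
          ((R + Bᵀ * P K * B) * K * C - Bᵀ * P K * A)) i j = 0 := by
        intro i j
        simp [Matrix.mul_apply]
      simp [Matrix.trace, Matrix.diag, this]
    have hKK : K = Kstar := by
      ext i j; exact i.elim0
    rw [hE0, hKK]
    simp
  · -- main case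
    obtain ⟨hPKpd, hPKeq⟩ := hP K hK
    obtain ⟨hPspd, hPseq⟩ := hP Kstar hKstar
    set Pk := P K with hPk
    set Ps := P Kstar with hPs
    have hPsym : Pkᵀ = Pk := hPKpd.isHermitian
    have hRsym : Rᵀ = R := hR.isHermitian
    set As : Matrix (Fin n) (Fin n) ℝ := A - B * Kstar * C with hAs
    set Mm : Matrix (Fin m) (Fin m) ℝ := R + Bᵀ * Pk * B with hMm
    set E : Matrix (Fin m) (Fin n) ℝ := Mm * K * C - Bᵀ * Pk * A with hE
    set D : Matrix (Fin m) (Fin n) ℝ := Kstar * C - K * C with hD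
    set S : Matrix (Fin n) (Fin n) ℝ := Sstar with hSS
    -- Positivity facts
    have hBPB : (Bᵀ * Pk * B).PosSemidef := by
      have := hPKpd.posSemidef.conjTranspose_mul_mul_same B
      rwa [Matrix.conjTranspose_eq_transpose_of_trivial] at this
    have hMpd : Mm.PosDef := hR.add_posSemidef hBPB
    have hMsym : Mmᵀ = Mm := hMpd.isHermitian
    have hMdet : IsUnit Mm.det := isUnit_iff_ne_zero.2 hMpd.det_pos.ne'
    have hinv : Mm⁻¹ * Mm = 1 := Matrix.nonsing_inv_mul _ hMdet
    have hinv2 : Mm * Mm⁻¹ = 1 := Matrix.mul_nonsing_inv _ hMdet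
    have hMinvpsd : (Mm⁻¹).PosSemidef := hMpd.inv.posSemidef
    have hlam : 0 < lambdaMin R := SOF.lambdaMin_pos hm hR
    -- quadratic form bound for Mm
    have hqM : ∀ v : Fin m → ℝ, lambdaMin R * (v ⬝ᵥ v) ≤ v ⬝ᵥ Mm *ᵥ v := by
      intro v
      have h1 := SOF.lambdaMin_quad hR.isHermitian v
      have h2 : 0 ≤ v ⬝ᵥ (Bᵀ * Pk * B) *ᵥ v := by simpa using hBPB.dotProduct_mulVec_nonneg v
      rw [hMm, Matrix.add_mulVec, dotProduct_add]
      linarith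
    -- Step 1: performance difference identity
    have hX : X₀ = S - As * S * Asᵀ := eq_sub_of_add_eq hSstar.symm
    have cyc : ∀ X : Matrix (Fin n) (Fin n) ℝ,
        (X * (As * S * Asᵀ)).trace = ((Asᵀ * X * As) * S).trace := by
      intro X
      have e1 : X * (As * S * Asᵀ) = (X * As * S) * Asᵀ := by
        simp only [Matrix.mul_assoc]
      rw [e1, Matrix.trace_mul_comm]
      simp only [Matrix.mul_assoc]
    set Δ : Matrix (Fin n) (Fin n) ℝ :=
      Pk - (Q + Cᵀ * Kstarᵀ * R * Kstar * C + Asᵀ * Pk * As) with hΔ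
    have step1 : ((Pk - Ps) * X₀).trace = (Δ * S).trace := by
      have e2 : ((Pk - Ps) * X₀).trace
          = (((Pk - Ps) - Asᵀ * (Pk - Ps) * As) * S).trace := by
        rw [hX, Matrix.mul_sub, Matrix.trace_sub, cyc]
        simp only [Matrix.sub_mul, Matrix.mul_sub, Matrix.trace_sub]
      rw [e2]
      have e2b : (Pk - Ps) - Asᵀ * (Pk - Ps) * As = Δ := by
        rw [hΔ]
        simp only [Matrix.mul_sub, Matrix.sub_mul]
        nth_rewrite 1 [hPseq]
        abel
      rw [e2b]
    -- Step 2: algebraic form of Δ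
    have step2 : Δ = -(Dᵀ * Mm * D + Dᵀ * E + Eᵀ * D) :=
      SOF.delta_eq A B C Q R hRsym Pk hPsym K Kstar hPKeq
    -- Step 3: completed square
    have hsq : Eᵀ * Mm⁻¹ * E - Δ = (Mm * D + E)ᵀ * Mm⁻¹ * (Mm * D + E) := by
      rw [step2, SOF.complete_square Mm hMsym hinv hinv2 D E]
      abel
    -- Sstar = Tᵀ * T
    obtain ⟨T, hT⟩ : ∃ T : Matrix (Fin n) (Fin n) ℝ, S = Tᴴ * T := by
      open scoped MatrixOrder in
      exact CStarAlgebra.nonneg_iff_eq_star_mul_self.mp hSstarpos.posSemidef.nonneg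
    rw [Matrix.conjTranspose_eq_transpose_of_trivial] at hT
    -- (i) (Δ S).trace ≤ ((Eᵀ Mm⁻¹ E) S).trace
    have ineq1 : (Δ * S).trace ≤ ((Eᵀ * Mm⁻¹ * E) * S).trace := by
      have h0 : 0 ≤ (((Mm * D + E)ᵀ * Mm⁻¹ * (Mm * D + E)) * S).trace := by
        set Z : Matrix (Fin m) (Fin n) ℝ := Mm * D + E with hZ
        have e4 : ((Zᵀ * Mm⁻¹ * Z) * S).trace = ((T * Zᵀ) * Mm⁻¹ * (T * Zᵀ)ᵀ).trace := by
          rw [hT]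
          rw [show (Zᵀ * Mm⁻¹ * Z) * (Tᵀ * T) = ((Zᵀ * Mm⁻¹ * Z) * Tᵀ) * T from
            (Matrix.mul_assoc _ _ _).symm, Matrix.trace_mul_comm]
          congr 1
          rw [Matrix.transpose_mul, Matrix.transpose_transpose]
          simp only [Matrix.mul_assoc]
        rw [e4]
        exact SOF.trace_quad_nonneg _ hMinvpsd
      have e5 : ((Eᵀ * Mm⁻¹ * E) * S).trace - (Δ * S).trace
          = (((Mm * D + E)ᵀ * Mm⁻¹ * (Mm * D + E)) * S).trace := by
        rw [← hsq, Matrix.sub_mul (Eᵀ * Mm⁻¹ * E) Δ S, Matrix.trace_sub]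
      linarith
    -- (ii) ((Eᵀ Mm⁻¹ E) S).trace ≤ specNorm S * (Eᵀ Mm⁻¹ E).trace
    have hW : (Eᵀ * Mm⁻¹ * E).PosSemidef := by
      have := hMinvpsd.conjTranspose_mul_mul_same E
      rwa [Matrix.conjTranspose_eq_transpose_of_trivial] at this
    obtain ⟨Y, hY⟩ : ∃ Y : Matrix (Fin n) (Fin n) ℝ, Eᵀ * Mm⁻¹ * E = Yᴴ * Y := by
      open scoped MatrixOrder in
      exact CStarAlgebra.nonneg_iff_eq_star_mul_self.mp hW.nonneg
    rw [Matrix.conjTranspose_eq_transpose_of_trivial] at hY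
    have ineq2 : ((Eᵀ * Mm⁻¹ * E) * S).trace ≤ specNorm S * (Eᵀ * Mm⁻¹ * E).trace := by
      have e6 : ((Eᵀ * Mm⁻¹ * E) * S).trace = (Y * S * Yᵀ).trace := by
        rw [hY, Matrix.mul_assoc, Matrix.trace_mul_comm]
      have e7 : (Eᵀ * Mm⁻¹ * E).trace = (Y * Yᵀ).trace := by
        rw [hY, Matrix.trace_mul_comm]
      rw [e6, e7]
      exact SOF.trace_quad_le Y S (specNorm S) (SOF.specNorm_quad S)
    -- (iii) (Eᵀ Mm⁻¹ E).trace ≤ (lambdaMin R)⁻¹ * (Eᵀ E).trace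
    have ineq3 : (Eᵀ * Mm⁻¹ * E).trace ≤ (lambdaMin R)⁻¹ * (Eᵀ * E).trace := by
      have h8 := SOF.trace_quad_le Eᵀ Mm⁻¹ (lambdaMin R)⁻¹
        (SOF.inv_quad_bound hMpd hlam hqM)
      rwa [Matrix.transpose_transpose] at h8
    -- Combine
    have lhs_eq : (Pk * X₀).trace - (Ps * X₀).trace = ((Pk - Ps) * X₀).trace := by
      rw [Matrix.sub_mul, Matrix.trace_sub]
    have hSnn : (0 : ℝ) ≤ specNorm S := norm_nonneg _
    have final : (Pk * X₀).trace - (Ps * X₀).trace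
        ≤ specNorm S * ((lambdaMin R)⁻¹ * (Eᵀ * E).trace) := by
      rw [lhs_eq, step1]
      calc (Δ * S).trace ≤ ((Eᵀ * Mm⁻¹ * E) * S).trace := ineq1
        _ ≤ specNorm S * (Eᵀ * Mm⁻¹ * E).trace := ineq2
        _ ≤ specNorm S * ((lambdaMin R)⁻¹ * (Eᵀ * E).trace) :=
            mul_le_mul_of_nonneg_left ineq3 hSnn
    calc (Pk * X₀).trace - (Ps * X₀).trace
        ≤ specNorm S * ((lambdaMin R)⁻¹ * (Eᵀ * E).trace) := final
      _ = specNorm Sstar * (Eᵀ * E).trace / lambdaMin R := by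
          rw [hSS]; field_simp
end

section
/- Directional derivative of the Lyapunov solution: for stabilizing K ∈ 𝕂 and direction Z ∈ ℝ^{m×d}, the derivative P'_K[Z] := d/dη|_{η=0} P_{K+ηZ} satisfies the Lyapunov equation P'_K[Z] = Cᵀ Zᵀ E_K + E_Kᵀ Z C + (A−BKC)ᵀ P'_K[Z] (A−BKC), and hence P'_K[Z] = Σ_{j=0}^∞ ((A−BKC)ᵀ)^j (Cᵀ Zᵀ E_K + E_Kᵀ ZC) (A−BKC)^j. -/
open Matrix Filter Topology

open scoped ENNReal NNReal

section Helpers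

variable {n : ℕ}

attribute [local instance] Matrix.frobeniusNormedAddCommGroup Matrix.frobeniusNormedRing
  Matrix.frobeniusNormedSpace Matrix.frobeniusNormedAlgebra

noncomputable def cx {n : ℕ} (M : Matrix (Fin n) (Fin n) ℝ) : Matrix (Fin n) (Fin n) ℂ :=
  M.map (algebraMap ℝ ℂ)

lemma cx_pow (M : Matrix (Fin n) (Fin n) ℝ) (k : ℕ) : cx (M ^ k) = (cx M) ^ k := by
  simpa [cx] using map_pow ((algebraMap ℝ ℂ).mapMatrix) M k

lemma cx_norm (M : Matrix (Fin n) (Fin n) ℝ) : ‖cx M‖ = ‖M‖ :=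
  Matrix.frobenius_norm_map_eq M _ fun a => Complex.norm_real a

instance : CompleteSpace (Matrix (Fin n) (Fin n) ℂ) := FiniteDimensional.complete ℂ _
instance : CompleteSpace (Matrix (Fin n) (Fin n) ℝ) := FiniteDimensional.complete ℝ _

lemma spectralRadius_lt_one {M : Matrix (Fin n) (Fin n) ℝ} (h : specRad M < 1) :
    spectralRadius ℂ (cx M) < 1 := by
  have hb : BddAbove ((fun z : ℂ => ‖z‖) '' spectrum ℂ (cx M)) := by
    refine ⟨‖cx M‖ * ‖(1 : Matrix (Fin n) (Fin n) ℂ)‖, ?_⟩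
    rintro x ⟨z, hz, rfl⟩
    exact spectrum.norm_le_norm_mul_of_mem hz
  have hle : spectralRadius ℂ (cx M) ≤ ENNReal.ofReal (specRad M) := by
    rw [spectralRadius]
    refine iSup₂_le fun z hz => ?_
    rw [show ((‖z‖₊ : ℝ≥0) : ℝ≥0∞) = ENNReal.ofReal ‖z‖ from (ofReal_norm z).symm]
    exact ENNReal.ofReal_le_ofReal (le_csSup hb ⟨z, hz, rfl⟩)
  exact lt_of_le_of_lt hle (by simpa using ENNReal.ofReal_lt_one.mpr h)

/-- geometric decay from spectral radius < 1 -/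
lemma geom_decay {M : Matrix (Fin n) (Fin n) ℝ} (h : specRad M < 1) :
    ∃ c r : ℝ, 0 < c ∧ 0 < r ∧ r < 1 ∧ ∀ k, ‖M ^ k‖ ≤ c * r ^ k := by
  have hG := spectrum.pow_nnnorm_pow_one_div_tendsto_nhds_spectralRadius (cx M)
  obtain ⟨r, hr1, hr2⟩ := ENNReal.lt_iff_exists_nnreal_btwn.mp (spectralRadius_lt_one h)
  have hev : ∀ᶠ k : ℕ in atTop, ((‖(cx M) ^ k‖₊ : ℝ≥0∞) ^ (1 / (k:ℝ))) < (r:ℝ≥0∞) :=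
    hG.eventually_lt_const hr1
  have hr0 : (0:ℝ) < r := by
    rcases eq_or_lt_of_le (show (0:ℝ≥0) ≤ r by positivity) with h0 | h0
    · exfalso
      rw [← h0] at hr1
      simp at hr1
    · exact_mod_cast h0
  obtain ⟨N₀, hN₀⟩ := eventually_atTop.mp hev
  set N₁ := max N₀ 1 with hN₁def
  have key : ∀ k, N₁ ≤ k → ‖M ^ k‖ ≤ (r:ℝ) ^ k := by
    intro k hk
    have hk1 : 1 ≤ k := le_trans (le_max_right _ _) hk
    have h2 : ((‖(cx M) ^ k‖₊ : ℝ≥0∞) ^ (1 / (k:ℝ))) < (r:ℝ≥0∞) :=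
      hN₀ k (le_trans (le_max_left _ _) hk)
    have hkne : (k:ℝ) ≠ 0 := by positivity
    have h3 : (‖(cx M) ^ k‖₊ : ℝ≥0∞) < (r:ℝ≥0∞) ^ k := by
      have := ENNReal.rpow_lt_rpow h2 (by positivity : (0:ℝ) < k)
      rwa [← ENNReal.rpow_mul, one_div, inv_mul_cancel₀ hkne,
        ENNReal.rpow_one, ENNReal.rpow_natCast] at this
    have h4 : ‖(cx M) ^ k‖ ≤ (r:ℝ) ^ k := by
      have := h3.le
      have h5 : (‖(cx M) ^ k‖₊ : ℝ≥0∞) ≤ ((r ^ k : ℝ≥0) : ℝ≥0∞) := by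
        simpa using this
      have := ENNReal.coe_le_coe.mp h5
      calc ‖(cx M) ^ k‖ = ((‖(cx M) ^ k‖₊ : ℝ≥0) : ℝ) := rfl
        _ ≤ ((r ^ k : ℝ≥0) : ℝ) := by exact_mod_cast this
        _ = (r:ℝ) ^ k := by push_cast; ring
    rw [← cx_pow, cx_norm] at h4
    exact h4
  set c := 1 + ∑ j ∈ Finset.range N₁, ‖M ^ j‖ / (r:ℝ) ^ j with hcdef
  have hc1 : (1:ℝ) ≤ c := by
    have : (0:ℝ) ≤ ∑ j ∈ Finset.range N₁, ‖M ^ j‖ / (r:ℝ) ^ j :=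
      Finset.sum_nonneg fun j _ => by positivity
    rw [hcdef]; linarith
  refine ⟨c, r, by linarith, hr0, by exact_mod_cast hr2, fun k => ?_⟩
  rcases lt_or_ge k N₁ with hk | hk
  · have hmem : ‖M ^ k‖ / (r:ℝ) ^ k ≤ ∑ j ∈ Finset.range N₁, ‖M ^ j‖ / (r:ℝ) ^ j :=
      Finset.single_le_sum (f := fun j => ‖M ^ j‖ / (r:ℝ) ^ j) (fun j _ => by positivity) (Finset.mem_range.mpr hk)
    have : ‖M ^ k‖ / (r:ℝ) ^ k ≤ c := le_trans hmem (by rw [hcdef]; linarith)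
    calc ‖M ^ k‖ = (‖M ^ k‖ / (r:ℝ) ^ k) * (r:ℝ) ^ k := by field_simp
      _ ≤ c * (r:ℝ) ^ k := by
          exact mul_le_mul_of_nonneg_right this (by positivity)
  · calc ‖M ^ k‖ ≤ (r:ℝ) ^ k := key k hk
      _ ≤ c * (r:ℝ) ^ k := le_mul_of_one_le_left (by positivity) hc1
/-- specRad < 1 from a small power -/
lemma specRad_lt_one_of_pow {M : Matrix (Fin n) (Fin n) ℝ} {N : ℕ} (hN : 1 ≤ N)
    (h : ‖(cx M) ^ N‖ * ‖(1 : Matrix (Fin n) (Fin n) ℂ)‖ < 1) : specRad M < 1 := by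
  set t := ‖(cx M) ^ N‖ * ‖(1 : Matrix (Fin n) (Fin n) ℂ)‖ with htdef
  have ht0 : 0 ≤ t := mul_nonneg (norm_nonneg _) (norm_nonneg _)
  have hNpos : (0:ℝ) < 1 / N := by positivity
  have hbound : ∀ z ∈ spectrum ℂ (cx M), ‖z‖ ≤ t ^ (1 / (N:ℝ)) := by
    intro z hz
    have hzN : z ^ N ∈ spectrum ℂ ((cx M) ^ N) :=
      spectrum.pow_image_subset (cx M) N ⟨z, hz, rfl⟩
    have h1 : ‖z ^ N‖ ≤ t := spectrum.norm_le_norm_mul_of_mem hzN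
    have h2 : ‖z‖ ^ N ≤ t := by rwa [norm_pow] at h1
    calc ‖z‖ = (‖z‖ ^ N) ^ (1 / (N:ℝ)) := by
          rw [← Real.rpow_natCast (‖z‖) N, ← Real.rpow_mul (norm_nonneg _), one_div,
            mul_inv_cancel₀ (by positivity : (N:ℝ) ≠ 0), Real.rpow_one]
      _ ≤ t ^ (1 / (N:ℝ)) := Real.rpow_le_rpow (by positivity) h2 (by positivity)
  have hsup : specRad M ≤ t ^ (1 / (N:ℝ)) := by
    apply Real.sSup_le
    · rintro x ⟨z, hz, rfl⟩; exact hbound z hz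
    · positivity
  have hlt : t ^ (1 / (N:ℝ)) < 1 := by
    rcases eq_or_lt_of_le ht0 with h0 | h0
    · rw [← h0, Real.zero_rpow (by positivity)]; norm_num
    · exact Real.rpow_lt_one ht0 h hNpos
  exact lt_of_le_of_lt hsup hlt

lemma cx_sub (M N : Matrix (Fin n) (Fin n) ℝ) : cx (M - N) = cx M - cx N := by
  simpa [cx] using map_sub ((algebraMap ℝ ℂ).mapMatrix) M N

lemma cx_smul (η : ℝ) (M : Matrix (Fin n) (Fin n) ℝ) : cx (η • M) = η • cx M := by
  ext i j
  simp [cx, Matrix.smul_apply, Complex.real_smul]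

lemma entry_le_frob (M : Matrix (Fin n) (Fin n) ℝ) (i j : Fin n) : |M i j| ≤ ‖M‖ := by
  rw [Matrix.frobenius_norm_def]
  have h1 : |M i j| ^ (2:ℝ) ≤ ∑ a, ∑ b, ‖M a b‖ ^ (2:ℝ) := by
    calc |M i j| ^ (2:ℝ) = ‖M i j‖ ^ (2:ℝ) := by rw [Real.norm_eq_abs]
      _ ≤ ∑ b, ‖M i b‖ ^ (2:ℝ) :=
          Finset.single_le_sum (f := fun b => ‖M i b‖ ^ (2:ℝ))
            (fun b _ => by positivity) (Finset.mem_univ j)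
      _ ≤ ∑ a, ∑ b, ‖M a b‖ ^ (2:ℝ) :=
          Finset.single_le_sum (f := fun a => ∑ b, ‖M a b‖ ^ (2:ℝ))
            (fun a _ => Finset.sum_nonneg fun b _ => by positivity) (Finset.mem_univ i)
  calc |M i j| = (|M i j| ^ (2:ℝ)) ^ (1/2:ℝ) := by
        rw [← Real.rpow_mul (abs_nonneg _)]; norm_num
    _ ≤ (∑ a, ∑ b, ‖M a b‖ ^ (2:ℝ)) ^ (1/2:ℝ) :=
        Real.rpow_le_rpow (by positivity) h1 (by norm_num)

lemma tendsto_entry_of_frob {ι : Type*} {l : Filter ι} {F : ι → Matrix (Fin n) (Fin n) ℝ}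
    {L : Matrix (Fin n) (Fin n) ℝ} (h : Tendsto F l (𝓝 L)) (i j : Fin n) :
    Tendsto (fun x => F x i j) l (𝓝 (L i j)) := by
  replace h := tendsto_iff_norm_sub_tendsto_zero.1 h
  rw [tendsto_iff_norm_sub_tendsto_zero]
  refine squeeze_zero (fun x => norm_nonneg _) (fun x => ?_) h
  calc ‖F x i j - L i j‖ = |(F x - L) i j| := by rw [Real.norm_eq_abs, Matrix.sub_apply]
    _ ≤ ‖F x - L‖ := entry_le_frob _ i j


lemma norm_one_mul_pos : (0:ℝ) ≤ ‖(1 : Matrix (Fin n) (Fin n) ℂ)‖ := norm_nonneg _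

lemma pow_norm_tendsto_zero {M : Matrix (Fin n) (Fin n) ℝ} (h : specRad M < 1) :
    Tendsto (fun k => ‖M ^ k‖) atTop (𝓝 0) := by
  obtain ⟨c, r, hc, hr0, hr1, hb⟩ := geom_decay h
  have : Tendsto (fun k : ℕ => c * r ^ k) atTop (𝓝 0) := by
    simpa using (tendsto_pow_atTop_nhds_zero_of_lt_one hr0.le hr1).const_mul c
  exact squeeze_zero (fun k => norm_nonneg _) hb this

lemma eventually_specRad_lt_one {AK E : Matrix (Fin n) (Fin n) ℝ} (h : specRad AK < 1) :
    ∀ᶠ η : ℝ in 𝓝 0, specRad (AK - η • E) < 1 := by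
  -- find N ≥ 1 with small power
  have hcx : Tendsto (fun k => ‖(cx AK) ^ k‖ * ‖(1 : Matrix (Fin n) (Fin n) ℂ)‖) atTop (𝓝 0) := by
    have h1 : Tendsto (fun k => ‖(cx AK) ^ k‖) atTop (𝓝 0) := by
      have := pow_norm_tendsto_zero h
      refine this.congr fun k => ?_
      rw [← cx_pow, cx_norm]
    simpa using h1.mul_const _
  obtain ⟨N, hN1, hNs⟩ : ∃ N : ℕ, 1 ≤ N ∧
      ‖(cx AK) ^ N‖ * ‖(1 : Matrix (Fin n) (Fin n) ℂ)‖ < 1 := by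
    have h2 := (hcx.eventually_lt_const (by norm_num : (0:ℝ) < 1)).and (eventually_ge_atTop 1)
    obtain ⟨N, hN⟩ := h2.exists
    exact ⟨N, hN.2, hN.1⟩
  -- continuity in η
  have hcont : Continuous fun η : ℝ =>
      ‖(cx AK - η • cx E) ^ N‖ * ‖(1 : Matrix (Fin n) (Fin n) ℂ)‖ := by
    have hc1 : Continuous fun η : ℝ => cx AK - η • cx E :=
      continuous_const.sub (continuous_id.smul continuous_const)
    exact ((hc1.pow N).norm).mul continuous_const
  have h0 : ‖(cx AK - (0:ℝ) • cx E) ^ N‖ * ‖(1 : Matrix (Fin n) (Fin n) ℂ)‖ < 1 := by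
    simpa using hNs
  have hev := (hcont.tendsto 0).eventually_lt_const h0
  refine hev.mono fun η hη => ?_
  refine specRad_lt_one_of_pow hN1 ?_
  rwa [cx_sub, cx_smul]

lemma specRad_transpose (M : Matrix (Fin n) (Fin n) ℝ) : specRad Mᵀ = specRad M := by
  unfold specRad
  congr 1
  have hs : spectrum ℂ (Mᵀ.map (algebraMap ℝ ℂ)) = spectrum ℂ (M.map (algebraMap ℝ ℂ)) := by
    ext z
    show ¬ IsUnit _ ↔ ¬ IsUnit _
    rw [not_iff_not]
    have h1 : algebraMap ℂ (Matrix (Fin n) (Fin n) ℂ) z - Mᵀ.map (algebraMap ℝ ℂ)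
        = (algebraMap ℂ (Matrix (Fin n) (Fin n) ℂ) z - M.map (algebraMap ℝ ℂ))ᵀ := by
      rw [transpose_sub]
      congr 1
      simp [Matrix.algebraMap_eq_diagonal]
    rw [h1, Matrix.isUnit_transpose]
  rw [hs]

lemma sandwich_zero {AK D : Matrix (Fin n) (Fin n) ℝ} (h : specRad AK < 1)
    (hD : D = AKᵀ * D * AK) : D = 0 := by
  have hT : specRad AKᵀ < 1 := by rwa [specRad_transpose]
  obtain ⟨c, r, hc, hr0, hr1, hb⟩ := geom_decay h
  obtain ⟨cT, rT, hcT, hrT0, hrT1, hbT⟩ := geom_decay hT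
  have hiter : ∀ k, D = (AKᵀ) ^ k * D * AK ^ k := by
    intro k
    induction k with
    | zero => simp
    | succ k ih =>
      calc D = (AKᵀ) ^ k * D * AK ^ k := ih
        _ = (AKᵀ) ^ k * (AKᵀ * D * AK) * AK ^ k := by rw [← hD]
        _ = (AKᵀ) ^ (k+1) * D * AK ^ (k+1) := by rw [pow_succ, pow_succ']; noncomm_ring
  have hub : ∀ k, ‖D‖ ≤ cT * ‖D‖ * c * (rT * r) ^ k := by
    intro k
    calc ‖D‖ = ‖(AKᵀ) ^ k * D * AK ^ k‖ := by rw [← hiter k]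
      _ ≤ ‖(AKᵀ) ^ k * D‖ * ‖AK ^ k‖ := norm_mul_le _ _
      _ ≤ ‖(AKᵀ) ^ k‖ * ‖D‖ * ‖AK ^ k‖ :=
          mul_le_mul_of_nonneg_right (norm_mul_le _ _) (norm_nonneg _)
      _ ≤ (cT * rT ^ k) * ‖D‖ * (c * r ^ k) := by
          have h1 := hbT k
          have h2 := hb k
          have := mul_le_mul (mul_le_mul_of_nonneg_right h1 (norm_nonneg D)) h2
            (norm_nonneg _) (by positivity)
          linarith [this]
      _ = cT * ‖D‖ * c * (rT * r) ^ k := by ring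
  have hlim : Tendsto (fun k : ℕ => cT * ‖D‖ * c * (rT * r) ^ k) atTop (𝓝 0) := by
    simpa using (tendsto_pow_atTop_nhds_zero_of_lt_one (by positivity)
      (by nlinarith : rT * r < 1)).const_mul (cT * ‖D‖ * c)
  have hD0 : ‖D‖ ≤ 0 := le_of_tendsto_of_tendsto' tendsto_const_nhds hlim hub
  simpa using norm_le_zero_iff.mp hD0

lemma lyap_symm {AK Q0 P : Matrix (Fin n) (Fin n) ℝ} (h : specRad AK < 1)
    (hQ0 : Q0ᵀ = Q0) (hP : P = Q0 + AKᵀ * P * AK) : Pᵀ = P := by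
  have hPT : Pᵀ = Q0 + AKᵀ * Pᵀ * AK := by
    conv_lhs => rw [hP]
    rw [transpose_add, hQ0, transpose_mul, transpose_mul, transpose_transpose]
    noncomm_ring
  have hD : P - Pᵀ = AKᵀ * (P - Pᵀ) * AK := by
    calc P - Pᵀ = (Q0 + AKᵀ * P * AK) - (Q0 + AKᵀ * Pᵀ * AK) := by rw [← hP, ← hPT]
      _ = AKᵀ * (P - Pᵀ) * AK := by noncomm_ring
  have := sandwich_zero h hD
  rw [sub_eq_zero] at this
  exact this.symm

lemma hasSum_lyap {AK W P' : Matrix (Fin n) (Fin n) ℝ} (h : specRad AK < 1)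
    (heq : P' = W + AKᵀ * P' * AK) :
    HasSum (fun k : ℕ => (AKᵀ) ^ k * W * AK ^ k) P' := by
  have hT : specRad AKᵀ < 1 := by rwa [specRad_transpose]
  obtain ⟨c, r, hc, hr0, hr1, hb⟩ := geom_decay h
  obtain ⟨cT, rT, hcT, hrT0, hrT1, hbT⟩ := geom_decay hT
  have hrr : rT * r < 1 := by nlinarith
  have bound : ∀ (X : Matrix (Fin n) (Fin n) ℝ) (k : ℕ),
      ‖(AKᵀ) ^ k * X * AK ^ k‖ ≤ cT * ‖X‖ * c * (rT * r) ^ k := by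
    intro X k
    calc ‖(AKᵀ) ^ k * X * AK ^ k‖ ≤ ‖(AKᵀ) ^ k * X‖ * ‖AK ^ k‖ := norm_mul_le _ _
      _ ≤ ‖(AKᵀ) ^ k‖ * ‖X‖ * ‖AK ^ k‖ :=
          mul_le_mul_of_nonneg_right (norm_mul_le _ _) (norm_nonneg _)
      _ ≤ (cT * rT ^ k) * ‖X‖ * (c * r ^ k) := by
          have := mul_le_mul (mul_le_mul_of_nonneg_right (hbT k) (norm_nonneg X)) (hb k)
            (norm_nonneg _) (by positivity)
          linarith [this]
      _ = cT * ‖X‖ * c * (rT * r) ^ k := by ring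
  have hsummable : Summable (fun k : ℕ => (AKᵀ) ^ k * W * AK ^ k) := by
    apply Summable.of_norm
    refine Summable.of_nonneg_of_le (fun k => norm_nonneg _) (fun k => bound W k) ?_
    exact (summable_geometric_of_lt_one (by positivity) hrr).mul_left _
  have hstep : ∀ N : ℕ, (AKᵀ) ^ N * P' * AK ^ N
      = (AKᵀ) ^ N * W * AK ^ N + (AKᵀ) ^ (N+1) * P' * AK ^ (N+1) := by
    intro N
    conv_lhs => rw [heq]
    rw [pow_succ, pow_succ']
    noncomm_ring
  have hpartial : ∀ N : ℕ, ∑ k ∈ Finset.range N, (AKᵀ) ^ k * W * AK ^ k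
      = P' - (AKᵀ) ^ N * P' * AK ^ N := by
    intro N
    induction N with
    | zero => simp
    | succ N ih =>
      rw [Finset.sum_range_succ, ih]
      rw [hstep N]
      abel
  have htail : Tendsto (fun N : ℕ => (AKᵀ) ^ N * P' * AK ^ N) atTop (𝓝 0) := by
    apply squeeze_zero_norm (fun N => bound P' N)
    simpa using (tendsto_pow_atTop_nhds_zero_of_lt_one (by positivity) hrr).const_mul
      (cT * ‖P'‖ * c)
  have hS := hsummable.hasSum
  have h1 : Tendsto (fun N : ℕ => ∑ k ∈ Finset.range N, (AKᵀ) ^ k * W * AK ^ k) atTop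
      (𝓝 P') := by
    have h2 : Tendsto (fun N : ℕ => P' - (AKᵀ) ^ N * P' * AK ^ N) atTop (𝓝 (P' - 0)) :=
      tendsto_const_nhds.sub htail
    rw [sub_zero] at h2
    exact h2.congr fun N => (hpartial N).symm
  have := tendsto_nhds_unique hS.tendsto_sum_nat h1
  rwa [this] at hS

lemma lyap_series_entry {AK W P' : Matrix (Fin n) (Fin n) ℝ} (h : specRad AK < 1)
    (heq : P' = W + AKᵀ * P' * AK) :
    ∀ i j, Tendsto (fun s : Finset ℕ => (∑ k ∈ s, (AKᵀ) ^ k * W * AK ^ k) i j) atTop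
      (𝓝 (P' i j)) :=
  fun i j => tendsto_entry_of_frob (hasSum_lyap h heq) i j

end Helpers

section DerivHelpers
variable {p q r : ℕ} {t : ℝ}

lemma entry_mul {X : ℝ → Matrix (Fin p) (Fin q) ℝ} {Y : ℝ → Matrix (Fin q) (Fin r) ℝ}
    {X' Xt : Matrix (Fin p) (Fin q) ℝ} {Y' Yt : Matrix (Fin q) (Fin r) ℝ}
    {D : Matrix (Fin p) (Fin r) ℝ}
    (hX : ∀ i j, HasDerivAt (fun η => X η i j) (X' i j) t)
    (hY : ∀ i j, HasDerivAt (fun η => Y η i j) (Y' i j) t)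
    (hXt : X t = Xt) (hYt : Y t = Yt) (hD : D = X' * Yt + Xt * Y') :
    ∀ i j, HasDerivAt (fun η => (X η * Y η) i j) (D i j) t := by
  intro i j
  have hfun : (fun η => (X η * Y η) i j) = fun η => ∑ k, X η i k * Y η k j := by
    funext η; exact Matrix.mul_apply
  have hval : D i j = ∑ k, (X' i k * Yt k j + Xt i k * Y' k j) := by
    rw [hD, Matrix.add_apply, Matrix.mul_apply, Matrix.mul_apply, Finset.sum_add_distrib]
  rw [hfun, hval]
  exact HasDerivAt.fun_sum fun k _ => by
    have hm := (hX i k).mul (hY k j)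
    rw [hXt, hYt] at hm
    exact hm

lemma entry_const {M : Matrix (Fin p) (Fin q) ℝ} :
    ∀ i j, HasDerivAt (fun _ : ℝ => M i j) ((0 : Matrix (Fin p) (Fin q) ℝ) i j) t := by
  intro i j
  simpa using hasDerivAt_const t (M i j)

lemma entry_const_sub {X : ℝ → Matrix (Fin p) (Fin q) ℝ} {X' : Matrix (Fin p) (Fin q) ℝ}
    (M : Matrix (Fin p) (Fin q) ℝ)
    (hX : ∀ i j, HasDerivAt (fun η => X η i j) (X' i j) t) :
    ∀ i j, HasDerivAt (fun η => (M - X η) i j) ((-X') i j) t := by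
  intro i j
  have : (fun η => (M - X η) i j) = fun η => M i j - X η i j := by
    funext η; rw [Matrix.sub_apply]
  rw [this]
  exact ((hasDerivAt_const t (M i j)).sub (hX i j)).congr_deriv (by simp)

lemma entry_add {X Y : ℝ → Matrix (Fin p) (Fin q) ℝ} {X' Y' : Matrix (Fin p) (Fin q) ℝ}
    (hX : ∀ i j, HasDerivAt (fun η => X η i j) (X' i j) t)
    (hY : ∀ i j, HasDerivAt (fun η => Y η i j) (Y' i j) t) :
    ∀ i j, HasDerivAt (fun η => (X η + Y η) i j) ((X' + Y') i j) t := by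
  intro i j
  have : (fun η => (X η + Y η) i j) = fun η => X η i j + Y η i j := by
    funext η; rw [Matrix.add_apply]
  rw [this, Matrix.add_apply]
  exact (hX i j).add (hY i j)

lemma entry_const_add {X : ℝ → Matrix (Fin p) (Fin q) ℝ} {X' : Matrix (Fin p) (Fin q) ℝ}
    (M : Matrix (Fin p) (Fin q) ℝ)
    (hX : ∀ i j, HasDerivAt (fun η => X η i j) (X' i j) t) :
    ∀ i j, HasDerivAt (fun η => (M + X η) i j) (X' i j) t := by
  intro i j
  have : (fun η => (M + X η) i j) = fun η => M i j + X η i j := by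
    funext η; rw [Matrix.add_apply]
  rw [this]
  exact ((hasDerivAt_const t (M i j)).add (hX i j)).congr_deriv (by simp)

lemma entry_transpose {X : ℝ → Matrix (Fin p) (Fin q) ℝ} {X' : Matrix (Fin p) (Fin q) ℝ}
    (hX : ∀ i j, HasDerivAt (fun η => X η i j) (X' i j) t) :
    ∀ i j, HasDerivAt (fun η => (X η)ᵀ i j) (X'ᵀ i j) t := fun i j => hX j i

end DerivHelpers


lemma tendsto_matrix_of_entry {N : ℕ} {ι : Type*} {l : Filter ι}
    {F : ι → Matrix (Fin N) (Fin N) ℝ} {L : Matrix (Fin N) (Fin N) ℝ}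
    (h : ∀ i j, Filter.Tendsto (fun x => F x i j) l (𝓝 (L i j))) :
    Filter.Tendsto F l (𝓝 L) :=
  tendsto_pi_nhds.mpr fun i => tendsto_pi_nhds.mpr fun j => h i j

set_option maxHeartbeats 1000000 in
/-- The directional derivative `P'_K[Z]` of the Lyapunov solution satisfies the
Lyapunov equation with forcing term `CᵀZᵀE_K + E_KᵀZC`, and equals the corresponding
series. -/
theorem lyapunov_directional_derivative {n m d : ℕ}
    (A : Matrix (Fin n) (Fin n) ℝ) (B : Matrix (Fin n) (Fin m) ℝ)
    (C : Matrix (Fin d) (Fin n) ℝ)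
    (Q : Matrix (Fin n) (Fin n) ℝ) (R : Matrix (Fin m) (Fin m) ℝ)
    (hQ : Q.PosDef) (hR : R.PosDef)
    (Pfun : Matrix (Fin m) (Fin d) ℝ → Matrix (Fin n) (Fin n) ℝ)
    (hLyap : ∀ K', specRad (A - B * K' * C) < 1 →
      Pfun K' = Q + Cᵀ * K'ᵀ * R * K' * C +
        (A - B * K' * C)ᵀ * Pfun K' * (A - B * K' * C))
    (K Z : Matrix (Fin m) (Fin d) ℝ) (hK : specRad (A - B * K * C) < 1)
    (hdiff : ∀ i j, DifferentiableAt ℝ (fun η : ℝ => Pfun (K + η • Z) i j) 0)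
    (P' : Matrix (Fin n) (Fin n) ℝ)
    (hP' : P' = Matrix.of fun i j => deriv (fun η : ℝ => Pfun (K + η • Z) i j) 0) :
    P' = Cᵀ * Zᵀ * ((R + Bᵀ * Pfun K * B) * K * C - Bᵀ * Pfun K * A) +
        ((R + Bᵀ * Pfun K * B) * K * C - Bᵀ * Pfun K * A)ᵀ * Z * C +
        (A - B * K * C)ᵀ * P' * (A - B * K * C) ∧
    P' = ∑' j : ℕ, ((A - B * K * C)ᵀ) ^ j *
        (Cᵀ * Zᵀ * ((R + Bᵀ * Pfun K * B) * K * C - Bᵀ * Pfun K * A) +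
          ((R + Bᵀ * Pfun K * B) * K * C - Bᵀ * Pfun K * A)ᵀ * Z * C) *
        (A - B * K * C) ^ j := by
  classical
  set AK := A - B * K * C with hAK
  set P := Pfun K with hPdef
  have hRs : Rᵀ = R := by
    rw [← Matrix.conjTranspose_eq_transpose_of_trivial]; exact hR.1
  have hQs : Qᵀ = Q := by
    rw [← Matrix.conjTranspose_eq_transpose_of_trivial]; exact hQ.1
  have hAff : ∀ η : ℝ, A - B * (K + η • Z) * C = AK - η • (B * Z * C) := by
    intro η
    rw [hAK]
    simp only [Matrix.mul_add, Matrix.add_mul, Matrix.smul_mul, Matrix.mul_smul]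
    abel
  have hg : ∀ᶠ η : ℝ in 𝓝 0, Pfun (K + η • Z) =
      Q + Cᵀ * (K + η • Z)ᵀ * R * (K + η • Z) * C +
        (A - B * (K + η • Z) * C)ᵀ * Pfun (K + η • Z) * (A - B * (K + η • Z) * C) := by
    have h1 := eventually_specRad_lt_one (E := B * Z * C) hK
    refine h1.mono fun η hη => ?_
    exact hLyap _ (by rwa [hAff η])
  -- entrywise derivatives
  have hKf : ∀ i j, HasDerivAt (fun η : ℝ => (K + η • Z) i j) (Z i j) 0 := by
    intro i j
    have h2 : (fun η : ℝ => (K + η • Z) i j) = fun η => K i j + η * Z i j := by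
      funext η; simp [Matrix.add_apply, Matrix.smul_apply]
    rw [h2]
    simpa using ((hasDerivAt_id (0:ℝ)).mul_const (Z i j)).const_add (K i j)
  have hKfT := entry_transpose hKf
  have hgd : ∀ i j, HasDerivAt (fun η : ℝ => Pfun (K + η • Z) i j) (P' i j) 0 := by
    intro i j
    have h2 := (hdiff i j).hasDerivAt
    rw [hP']
    simpa using h2
  have s1 := entry_mul (X := fun _ => Cᵀ) entry_const hKfT rfl (Yt := Kᵀ) (by simp)
    (D := Cᵀ * Zᵀ) (by simp)
  have s2 := entry_mul s1 (entry_const (M := R)) (Xt := Cᵀ * Kᵀ) (by simp) rfl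
    (D := Cᵀ * Zᵀ * R) (by simp)
  have s3 := entry_mul s2 hKf (Xt := Cᵀ * Kᵀ * R) (by simp) (Yt := K) (by simp)
    (D := Cᵀ * Zᵀ * R * K + Cᵀ * Kᵀ * R * Z) rfl
  have s4 := entry_mul s3 (entry_const (M := C)) (Xt := Cᵀ * Kᵀ * R * K) (by simp) rfl
    (D := Cᵀ * Zᵀ * R * K * C + Cᵀ * Kᵀ * R * Z * C) (by simp [Matrix.add_mul])
  have b1 := entry_mul (X := fun _ => B) entry_const hKf rfl (Yt := K) (by simp)
    (D := B * Z) (by simp)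
  have b2 := entry_mul b1 (entry_const (M := C)) (Xt := B * K) (by simp) rfl
    (D := B * Z * C) (by simp)
  have u1 := entry_const_sub A b2
  have u1T := entry_transpose u1
  have u2 := entry_mul u1T hgd (Xt := AKᵀ) (by simp [hAK]) (Yt := P) (by simp [hPdef])
    (D := (-(B * Z * C))ᵀ * P + AKᵀ * P') rfl
  have u3 := entry_mul u2 u1 (Xt := AKᵀ * P) (by simp [hAK, hPdef]) (Yt := AK) (by simp [hAK])
    (D := ((-(B * Z * C))ᵀ * P + AKᵀ * P') * AK + AKᵀ * P * (-(B * Z * C)))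
    (by rw [Matrix.mul_assoc])
  have r1 := entry_const_add Q s4
  have rtot := entry_add r1 u3
  have hPD : P' = (Cᵀ * Zᵀ * R * K * C + Cᵀ * Kᵀ * R * Z * C) +
      (((-(B * Z * C))ᵀ * P + AKᵀ * P') * AK + AKᵀ * P * (-(B * Z * C))) := by
    ext i j
    have e1 : deriv (fun η : ℝ => Pfun (K + η • Z) i j) 0 =
        deriv (fun η : ℝ => (Q + Cᵀ * (K + η • Z)ᵀ * R * (K + η • Z) * C +
          (A - B * (K + η • Z) * C)ᵀ * Pfun (K + η • Z) * (A - B * (K + η • Z) * C)) i j) 0 := by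
      apply Filter.EventuallyEq.deriv_eq
      exact hg.mono fun η hη => congrFun (congrFun hη i) j
    calc P' i j = deriv (fun η : ℝ => Pfun (K + η • Z) i j) 0 := by rw [hP']; rfl
      _ = _ := e1
      _ = _ := (rtot i j).deriv
  have hEq0 : P = (Q + Cᵀ * Kᵀ * R * K * C) + AKᵀ * P * AK := hLyap K hK
  have hPs : Pᵀ = P := by
    refine lyap_symm hK ?_ hEq0
    rw [transpose_add, hQs]
    congr 1
    simp only [transpose_mul, transpose_transpose, hRs, Matrix.mul_assoc]
  have h1 : Cᵀ * Zᵀ * R * K * C - (B * Z * C)ᵀ * P * AK =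
      Cᵀ * Zᵀ * ((R + Bᵀ * P * B) * K * C - Bᵀ * P * A) := by
    rw [hAK]
    simp only [transpose_sub, transpose_add, transpose_mul, transpose_neg, transpose_transpose,
      hPs, hRs, sub_eq_add_neg, Matrix.mul_add, Matrix.add_mul, Matrix.mul_neg, Matrix.neg_mul,
      Matrix.mul_assoc]
    abel
  have h2 : Cᵀ * Kᵀ * R * Z * C - AKᵀ * P * (B * Z * C) =
      ((R + Bᵀ * P * B) * K * C - Bᵀ * P * A)ᵀ * Z * C := by
    rw [hAK]
    simp only [transpose_sub, transpose_add, transpose_mul, transpose_neg, transpose_transpose,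
      hPs, hRs, sub_eq_add_neg, Matrix.mul_add, Matrix.add_mul, Matrix.mul_neg, Matrix.neg_mul,
      Matrix.mul_assoc]
    abel
  have goal1 : P' = Cᵀ * Zᵀ * ((R + Bᵀ * P * B) * K * C - Bᵀ * P * A) +
      ((R + Bᵀ * P * B) * K * C - Bᵀ * P * A)ᵀ * Z * C + AKᵀ * P' * AK := by
    conv_lhs => rw [hPD]
    rw [← h1, ← h2]
    simp only [transpose_neg, transpose_add, transpose_mul, transpose_sub, transpose_transpose,
      sub_eq_add_neg, Matrix.mul_add, Matrix.add_mul, Matrix.mul_neg,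
      Matrix.neg_mul, Matrix.mul_assoc]
    abel
  refine ⟨goal1, ?_⟩
  have heq1 : P' = (Cᵀ * Zᵀ * ((R + Bᵀ * P * B) * K * C - Bᵀ * P * A) +
      ((R + Bᵀ * P * B) * K * C - Bᵀ * P * A)ᵀ * Z * C) + AKᵀ * P' * AK := goal1
  have hSer := lyap_series_entry hK heq1
  have hHS : HasSum (fun k : ℕ => (AKᵀ) ^ k *
      (Cᵀ * Zᵀ * ((R + Bᵀ * P * B) * K * C - Bᵀ * P * A) +
        ((R + Bᵀ * P * B) * K * C - Bᵀ * P * A)ᵀ * Z * C) * AK ^ k) P' :=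
    tendsto_matrix_of_entry hSer
  exact hHS.tsum_eq.symm
end
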